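/- arXiv:1507.01065 — 13 statements merged into one kernel-verified Lean document; each statement's English description precedes it below -/
import Mathlib

section
/- With notation as before, suppose G : M → N has a left adjoint K and N has binary coproducts. Then the forgetful functor Gl(α) → N has a left adjoint, sending B ∈ N to (K B, F K B ⊔ B, i₁, [α_{KB}, η_B]), where i₁ is the coproduct injection and η is the unit of the adjunction K ⊣ G. -/
open CategoryTheory Category Limits

universe v u

variable {M : Type u} [Category.{v} M] {N : Type u} [Category.{v} N]

/-- The bigluing category `Gl(α)` of a natural transformation `α : F ⟶ G`. -/
structure Biglue (F G : M ⥤ N) (α : F ⟶ G) where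
  pt : M
  nt : N
  φ : F.obj pt ⟶ nt
  γ : nt ⟶ G.obj pt
  fac : φ ≫ γ = α.app pt

namespace Biglue

variable {F G : M ⥤ N} {α : F ⟶ G}

@[ext]
structure Hom (A B : Biglue F G α) where
  μ : A.pt ⟶ B.pt
  ν : A.nt ⟶ B.nt
  comm₁ : A.φ ≫ ν = F.map μ ≫ B.φ
  comm₂ : A.γ ≫ G.map μ = ν ≫ B.γ

instance : CategoryStruct (Biglue F G α) where
  Hom := Hom
  id A := ⟨𝟙 _, 𝟙 _, by simp, by simp⟩
  comp {A B C} f g :=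
    ⟨f.μ ≫ g.μ, f.ν ≫ g.ν, by
      rw [← Category.assoc, f.comm₁, Category.assoc, g.comm₁, ← Category.assoc, ← F.map_comp], by
      rw [G.map_comp, ← Category.assoc, f.comm₂, Category.assoc, g.comm₂, ← Category.assoc]⟩

@[simp] lemma id_μ (A : Biglue F G α) : Hom.μ (𝟙 A) = 𝟙 A.pt := rfl
@[simp] lemma id_ν (A : Biglue F G α) : Hom.ν (𝟙 A) = 𝟙 A.nt := rfl
@[simp] lemma comp_μ {A B C : Biglue F G α} (f : A ⟶ B) (g : B ⟶ C) :
    (f ≫ g).μ = f.μ ≫ g.μ := rfl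
@[simp] lemma comp_ν {A B C : Biglue F G α} (f : A ⟶ B) (g : B ⟶ C) :
    (f ≫ g).ν = f.ν ≫ g.ν := rfl

instance : Category (Biglue F G α) where
  id_comp f := Hom.ext (by simp) (by simp)
  comp_id f := Hom.ext (by simp) (by simp)
  assoc f g h := Hom.ext (by simp) (by simp)

/-- The forgetful functor `Gl(α) ⥤ N`. -/
def forgetN (F G : M ⥤ N) (α : F ⟶ G) : Biglue F G α ⥤ N where
  obj A := A.nt
  map f := f.ν
  map_id _ := rfl
  map_comp _ _ := rfl

/-- The object `(K B, F K B ⊔ B, i₁, [α_{KB}, η_B])` of `Gl(α)`, where `K ⊣ G`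
with unit `η` and `N` has binary coproducts. -/
noncomputable def KtilObj [HasBinaryCoproducts N] (K : N ⥤ M) (adjKG : K ⊣ G) (B : N) :
    Biglue F G α where
  pt := K.obj B
  nt := F.obj (K.obj B) ⨿ B
  φ := coprod.inl
  γ := coprod.desc (α.app (K.obj B)) (adjKG.unit.app B)
  fac := by exact coprod.inl_desc _ _

end Biglue

/-! A morphism `(μ, ν) : (K B, F K B ⊔ B, i₁, [α, η]) ⟶ A` is determined by `ν ∘ i₂ : B ⟶ A.nt`:
the `φ`-square forces `ν ∘ i₁ = A.φ ∘ F μ`, and the `γ`-square restricted to `B` reads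
`G μ ∘ η_B = A.γ ∘ ν ∘ i₂`, so `μ` is the adjoint transpose of `A.γ ∘ ν ∘ i₂`. Conversely every
`f : B ⟶ A.nt` extends in this way, the `γ`-square on `F K B` holding because `A.γ ∘ A.φ = α`
and `α` is natural. The bijection is natural in `A`, so these objects assemble into a left
adjoint. -/

namespace Biglue

variable {F G : M ⥤ N} {α : F ⟶ G} [HasBinaryCoproducts N] {K : N ⥤ M} (adj : K ⊣ G)

lemma inr_ktilObj_γ (B : N) :
    coprod.inr ≫ (KtilObj (α := α) K adj B).γ = adj.unit.app B :=
  coprod.inr_desc _ _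

noncomputable def liftKtilObj {B : N} {A : Biglue F G α} (f : B ⟶ A.nt) :
    KtilObj K adj B ⟶ A where
  μ := (adj.homEquiv B A.pt).symm (f ≫ A.γ)
  ν := coprod.desc (F.map ((adj.homEquiv B A.pt).symm (f ≫ A.γ)) ≫ A.φ) f
  comm₁ := coprod.inl_desc _ _
  comm₂ := by
    dsimp only [KtilObj]
    apply coprod.hom_ext
    · rw [coprod.inl_desc_assoc, coprod.inl_desc_assoc, assoc, A.fac]
      exact (α.naturality _).symm
    · rw [coprod.inr_desc_assoc, coprod.inr_desc_assoc, ← adj.homEquiv_unit,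
        Equiv.apply_symm_apply]

lemma ktilObj_hom_ext {B : N} {A : Biglue F G α} {g g' : KtilObj K adj B ⟶ A}
    (h : coprod.inr ≫ g.ν = coprod.inr ≫ g'.ν) : g = g' := by
  have transpose (g : KtilObj K adj B ⟶ A) :
      adj.homEquiv B A.pt g.μ = (coprod.inr ≫ g.ν) ≫ A.γ :=
    calc adj.homEquiv B A.pt g.μ
        _ = adj.unit.app B ≫ G.map g.μ := adj.homEquiv_unit ..
        _ = (coprod.inr ≫ (KtilObj K adj B).γ) ≫ G.map g.μ := (inr_ktilObj_γ adj B =≫ _).symm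
        _ = (coprod.inr ≫ g.ν) ≫ A.γ :=
          (assoc _ _ _).trans ((coprod.inr ≫= g.comm₂).trans (assoc _ _ _).symm)
  have hμ : g.μ = g'.μ :=
    (adj.homEquiv B A.pt).injective ((transpose g).trans ((h =≫ A.γ).trans (transpose g').symm))
  have hν : coprod.inl ≫ g.ν = coprod.inl ≫ g'.ν :=
    (g.comm₁.trans (congrArg (F.map · ≫ A.φ) hμ)).trans g'.comm₁.symm
  exact Hom.ext hμ (coprod.hom_ext hν h)

noncomputable def ktilObjHomEquiv (B : N) (A : Biglue F G α) :
    (KtilObj K adj B ⟶ A) ≃ (B ⟶ A.nt) where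
  toFun g := coprod.inr ≫ g.ν
  invFun := liftKtilObj adj
  left_inv _ := ktilObj_hom_ext adj (coprod.inr_desc _ _)
  right_inv _ := coprod.inr_desc _ _

end Biglue

/-- If `G` has a left adjoint `K` and `N` has binary coproducts, the forgetful
functor `Gl(α) ⥤ N` has a left adjoint, sending `B` to
`(K B, F K B ⊔ B, i₁, [α_{KB}, η_B])`. -/
theorem biglue_forgetN_has_left_adjoint
    (F G : M ⥤ N) (α : F ⟶ G) [HasBinaryCoproducts N]
    (K : N ⥤ M) (adjKG : K ⊣ G) :
    ∃ L : N ⥤ Biglue F G α,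
      Nonempty (L ⊣ Biglue.forgetN F G α) ∧
        ∀ B : N, L.obj B = Biglue.KtilObj (F := F) K adjKG B := by
  have naturality (B : N) (A A' : Biglue F G α) (g : A ⟶ A') (h : Biglue.KtilObj K adjKG B ⟶ A) :
      Biglue.ktilObjHomEquiv adjKG B A' (h ≫ g) =
        Biglue.ktilObjHomEquiv adjKG B A h ≫ (Biglue.forgetN F G α).map g :=
    (assoc _ _ _).symm
  exact ⟨Adjunction.leftAdjointOfEquiv _ naturality,
    ⟨Adjunction.adjunctionOfEquivLeft _ naturality⟩, fun _ => rfl⟩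
end

section
/- A small category C admits a structure of inverse category (i.e., is obtained by transfinitely iterating the gluing/collage construction starting from the empty category) if and only if one can assign an ordinal degree to each of its objects such that every nonidentity morphism strictly decreases degree. -/
open CategoryTheory Category

universe u

/-! A filtration `A` as on the left is the sublevel filtration `δ ↦ {x | deg x < δ}` of the
function `deg` sending `x` to the stage `γ` with `x ∈ A (γ + 1) \ A γ`: continuity at limits
forces every object to appear at a successor stage. The strata `A (δ + 1) \ A δ` are then the
fibres of `deg`, and the two stratum conditions say precisely that morphisms within a fibre are
identities and that no morphism raises the degree. -/

section Filtration

variable {α : Type u} {A : Ordinal.{u} → Set α}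

theorem exists_lt_mem_add_one_of_mem (h0 : A 0 = ∅) (hmono : Monotone A)
    (hlim : ∀ δ, Order.IsSuccLimit δ → A δ = ⋃ δ' < δ, A δ') {δ : Ordinal.{u}} {x : α}
    (hx : x ∈ A δ) : ∃ γ < δ, x ∈ A (γ + 1) := by
  rcases Ordinal.zero_or_succ_or_isSuccLimit δ with rfl | ⟨γ, rfl⟩ | hδ
  · simp [h0] at hx
  · exact ⟨γ, Order.lt_succ γ, hx⟩
  · rw [hlim δ hδ, Set.mem_iUnion₂] at hx
    obtain ⟨γ, hγ, hxγ⟩ := hx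
    exact ⟨γ, hγ, hmono (Order.le_succ γ) hxγ⟩

theorem exists_eq_setOf_lt (h0 : A 0 = ∅) (hmono : Monotone A)
    (hlim : ∀ δ, Order.IsSuccLimit δ → A δ = ⋃ δ' < δ, A δ') {β : Ordinal.{u}}
    (hβ : A β = Set.univ) : ∃ deg : α → Ordinal.{u}, A = fun δ => {x | deg x < δ} := by
  have hne (x : α) : {γ | x ∈ A (γ + 1)}.Nonempty :=
    ⟨β, hmono (Order.le_succ β) (hβ ▸ Set.mem_univ x)⟩
  refine ⟨fun x => sInf {γ | x ∈ A (γ + 1)},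
    funext fun δ => Set.ext fun x => ⟨fun hx => ?_, fun hx => ?_⟩⟩
  · obtain ⟨γ, hγ, hxγ⟩ := exists_lt_mem_add_one_of_mem h0 hmono hlim hx
    exact (csInf_le' (s := {γ | x ∈ A (γ + 1)}) hxγ).trans_lt hγ
  · exact hmono (Order.add_one_le_iff.2 hx) (csInf_mem (hne x))

variable (deg : α → Ordinal.{u})

theorem setOf_lt_eq_iUnion_of_isSuccLimit {δ : Ordinal.{u}} (hδ : Order.IsSuccLimit δ) :
    {x | deg x < δ} = ⋃ δ' < δ, {x | deg x < δ'} := by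
  ext x
  simp only [Set.mem_iUnion, Set.mem_ofPred_eq, exists_prop]
  exact ⟨fun h => ⟨deg x + 1, hδ.add_one_lt h, Order.lt_add_one_iff.2 le_rfl⟩,
    fun ⟨_, hδ', h⟩ => h.trans hδ'⟩

theorem setOf_lt_iSup_add_one_eq_univ : {x | deg x < ⨆ y, deg y + 1} = Set.univ :=
  Set.eq_univ_of_forall fun x =>
    Order.add_one_le_iff.1 (Ordinal.le_iSup (fun y => deg y + 1) x)

theorem mem_setOf_lt_add_one_diff_iff {δ : Ordinal.{u}} {x : α} :
    x ∈ {y | deg y < δ + 1} \ {y | deg y < δ} ↔ deg x = δ := by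
  simp only [Set.mem_sdiff, Set.mem_ofPred_eq, Order.lt_add_one_iff, not_lt]
  exact le_antisymm_iff.symm

end Filtration

section Category

variable {C : Type u} [Category C] (deg : C → Ordinal.{u})

theorem discrete_fibers_and_isEmpty_hom_of_lt_iff :
    ((∀ δ : Ordinal.{u}, ∀ x y : C, deg x = δ → deg y = δ → ∀ f : x ⟶ y, x = y ∧ HEq f (𝟙 x)) ∧
      (∀ δ : Ordinal.{u}, ∀ c x : C, deg c < δ → deg x = δ → IsEmpty (c ⟶ x))) ↔
    ((∀ x y : C, (x ⟶ y) → x ≠ y → deg y < deg x) ∧ ∀ x : C, ∀ f : x ⟶ x, f = 𝟙 x) := by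
  constructor
  · rintro ⟨hdisc, hnone⟩
    refine ⟨fun x y f hxy => ?_, fun x f => eq_of_heq (hdisc _ x x rfl rfl f).2⟩
    rcases lt_trichotomy (deg y) (deg x) with h | h | h
    · exact h
    · exact absurd (hdisc _ x y rfl h f).1 hxy
    · exact (hnone _ x y h rfl).elim f
  · rintro ⟨hlt, hid⟩
    refine ⟨fun δ x y hx hy f => ?_, fun δ c x hc hx => ⟨fun f => ?_⟩⟩
    · obtain rfl : x = y := by
        by_contra hxy
        exact (hlt x y f hxy).ne (hy.trans hx.symm)
      exact ⟨rfl, heq_of_eq (hid x f)⟩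
    · subst hx
      obtain rfl | hcx := eq_or_ne c x
      · exact hc.false
      · exact (hlt c x f hcx).asymm hc

end Category

/-- A small category admits the structure of an inverse category — i.e. it can be
built by transfinitely iterating the gluing (collage-along-a-profunctor-to-a-
discrete-set) construction, starting from the empty category — if and only if one
can assign an ordinal degree to each object so that every nonidentity morphism
strictly decreases degree.

The left-hand side is phrased via the induced filtration `A δ` of objects built
by stage `δ`: it starts empty, grows continuously, exhausts `C` by stage `β`, and
at each successor stage the newly added objects form a discrete stratum (the only
morphisms between them are identities) receiving no morphisms from the objects
already constructed — which is precisely what the collage of a profunctor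
`W : C ⇸ I` to a discrete set `I` looks like. -/
theorem inverse_category_iff_degree_function
    (C : Type u) [SmallCategory C] :
    (∃ (β : Ordinal.{u}) (A : Ordinal.{u} → Set C),
        A 0 = ∅ ∧
        Monotone A ∧
        (∀ δ : Ordinal.{u}, Order.IsSuccLimit δ → A δ = ⋃ δ' < δ, A δ') ∧
        A β = Set.univ ∧
        (∀ δ : Ordinal.{u}, ∀ x y : C, x ∈ A (δ + 1) \ A δ → y ∈ A (δ + 1) \ A δ →
          ∀ f : x ⟶ y, x = y ∧ HEq f (𝟙 x)) ∧
        (∀ δ : Ordinal.{u}, ∀ c x : C, c ∈ A δ → x ∈ A (δ + 1) \ A δ →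
          IsEmpty (c ⟶ x))) ↔
      (∃ deg : C → Ordinal.{u},
        (∀ x y : C, (x ⟶ y) → x ≠ y → deg y < deg x) ∧
        (∀ x : C, ∀ f : x ⟶ x, f = 𝟙 x)) := by
  constructor
  · rintro ⟨β, A, h0, hmono, hlim, hβ, hdisc, hnone⟩
    obtain ⟨deg, rfl⟩ := exists_eq_setOf_lt h0 hmono hlim hβ
    simp only [mem_setOf_lt_add_one_diff_iff, Set.mem_ofPred_eq] at hdisc hnone
    exact ⟨deg, (discrete_fibers_and_isEmpty_hom_of_lt_iff deg).1 ⟨hdisc, hnone⟩⟩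
  · rintro ⟨deg, hdeg⟩
    obtain ⟨hdisc, hnone⟩ := (discrete_fibers_and_isEmpty_hom_of_lt_iff deg).2 hdeg
    refine ⟨⨆ x, deg x + 1, fun δ => {x | deg x < δ}, by simp, fun _ _ h _ hx => hx.trans_le h,
      fun δ => setOf_lt_eq_iUnion_of_isSuccLimit deg, setOf_lt_iSup_add_one_eq_univ deg, ?_, ?_⟩
    · simpa only [mem_setOf_lt_add_one_diff_iff, Set.mem_ofPred_eq] using hdisc
    · simpa only [mem_setOf_lt_add_one_diff_iff, Set.mem_ofPred_eq] using hnone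
end

section
/- Every couniversal weak equivalence in the canonical model structure on Cat is an acyclic cofibration, i.e., if f : A → B is a functor every pushout of which is an equivalence of categories, then f is an equivalence of categories that is injective on objects. -/
/-!
An equivalence `f` that identifies two objects `a₀ ≠ a₁` has a morphism `ψ : a₀ ⟶ a₁` with
`f ψ = 𝟙`. Push `f` out along the functor `g` from `A` to the free group on the objects of `A`,
viewed as a one-object category, that sends every `x ⟶ y` to `y * x⁻¹`. The commuting square
forces the image of `g ψ = a₁ * a₀⁻¹ ≠ 1` in the pushout to be the identity, so the pushout of
`f` is not faithful.
-/

open CategoryTheory Limits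

universe u

namespace CategoryTheory

variable {A B C D : Type*} [Category A] [Category B] [Category C] [Category D]

lemma Functor.map_eq_eqToHom_of_comp_eq {f : A ⥤ B} {g : A ⥤ C} {top : B ⥤ D} {inc : C ⥤ D}
    [inc.Faithful] (comm : f ⋙ top = g ⋙ inc) {a₀ a₁ : A} {ψ : a₀ ⟶ a₁}
    {e : f.obj a₀ = f.obj a₁} (hψ : f.map ψ = eqToHom e) (hg : g.obj a₀ = g.obj a₁) :
    g.map ψ = eqToHom hg := by
  apply inc.map_injective
  have hinc := Functor.congr_hom comm.symm ψ
  simp only [Functor.comp_map, hψ, eqToHom_map, eqToHom_trans] at hinc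
  rw [hinc, eqToHom_map]

attribute [local instance] uliftCategory in
theorem Cat.injective_obj_of_forall_isPushout_faithful {A B : Cat.{u, u}} (f : A ⟶ B)
    [f.toFunctor.Full]
    (h : ∀ (C : Cat.{u, u}) (g : A ⟶ C) (D : Cat.{u, u}) (top : B ⟶ D) (inc : C ⟶ D),
      IsPushout f g top inc → inc.toFunctor.Faithful) :
    Function.Injective f.toFunctor.obj := by
  intro a₀ a₁ e
  let g : A ⥤ ULift.{u} (SingleObj (FreeGroup A)) :=
    SingleObj.differenceFunctor FreeGroup.of ⋙ ULift.upFunctor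
  have hp := IsPushout.of_hasPushout f g.toCatHom
  have : (pushout.inr f g.toCatHom).toFunctor.Faithful := h _ _ _ _ _ hp
  have hgψ : FreeGroup.of a₁ * (FreeGroup.of a₀)⁻¹ = 1 :=
    Functor.map_eq_eqToHom_of_comp_eq (inc := (pushout.inr f g.toCatHom).toFunctor)
      (congrArg Cat.Hom.toFunctor hp.w) (f.toFunctor.map_preimage (eqToHom e)) rfl
  exact FreeGroup.of_injective (mul_inv_eq_one.mp hgψ).symm

end CategoryTheory

/-- Every couniversal weak equivalence in the canonical model structure on `Cat`
is an acyclic cofibration: if every pushout of a functor `f : A ⟶ B` is an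
equivalence of categories, then `f` is itself an equivalence of categories and
is injective on objects. -/
theorem couniversal_weak_equivalence_is_acyclic_cofibration
    {A B : Cat.{u, u}} (f : A ⟶ B)
    (h : ∀ (C : Cat.{u, u}) (g : A ⟶ C) (D : Cat.{u, u}) (top : B ⟶ D) (inc : C ⟶ D),
      IsPushout f g top inc → inc.toFunctor.IsEquivalence) :
    f.toFunctor.IsEquivalence ∧ Function.Injective f.toFunctor.obj := by
  have hf : f.toFunctor.IsEquivalence := h A (𝟙 A) B (𝟙 B) f (IsPushout.id_vert f)
  exact ⟨hf, Cat.injective_obj_of_forall_isPushout_faithful f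
    fun C g D top inc hp => (h C g D top inc hp).faithful⟩
end

section
/- Let C be a category with an ordinal degree function on objects. Call a factorization (h,g) of a morphism f (with f = h ∘ g) fundamental if the intermediate object has degree strictly less than the degrees of both the domain and codomain of f, and call f basic if it admits no fundamental factorization. In an almost-Reedy category (where basic level morphisms are exactly identities and the category of fundamental factorizations of any non-basic morphism is connected), every morphism f factors as f = h ∘ g where g is basic and non-strictly lowers degree and h is basic and non-strictly raises degree. -/
open CategoryTheory Category

universe w v u

variable {C : Type u} [Category.{v} C]

/-- A fundamental factorization of `f : x ⟶ y`: a factorization through an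
object of degree strictly smaller than the degrees of both `x` and `y`. -/
structure FdFact (deg : C → Ordinal.{w}) {x y : C} (f : x ⟶ y) where
  z : C
  g : x ⟶ z
  h : z ⟶ y
  fac : g ≫ h = f
  lt_src : deg z < deg x
  lt_tgt : deg z < deg y

/-- A morphism is basic if it admits no fundamental factorization. -/
def Basic (deg : C → Ordinal.{w}) {x y : C} (f : x ⟶ y) : Prop :=
  IsEmpty (FdFact deg f)

/-- A connecting morphism between two fundamental factorizations of `f`. -/
def FdConn (deg : C → Ordinal.{w}) {x y : C} {f : x ⟶ y}
    (F F' : FdFact deg f) : Prop :=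
  ∃ k : F.z ⟶ F'.z, F.g ≫ k = F'.g ∧ k ≫ F'.h = F.h

/-- Two fundamental factorizations are connected by a zigzag of connecting
morphisms. -/
def FdZigzag (deg : C → Ordinal.{w}) {x y : C} {f : x ⟶ y} :
    FdFact deg f → FdFact deg f → Prop :=
  Relation.ReflTransGen (fun F F' => FdConn deg F F' ∨ FdConn deg F' F)

/-- `C` (with the degree function `deg`) is almost-Reedy: the basic level
morphisms are exactly the identities, and the category of fundamental
factorizations of any (non-basic) morphism is connected. -/
def AlmostReedy (deg : C → Ordinal.{w}) : Prop :=
  (∀ x : C, Basic deg (𝟙 x)) ∧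
  (∀ ⦃x y : C⦄ (f : x ⟶ y), deg x = deg y → Basic deg f → x = y ∧ HEq f (𝟙 x)) ∧
  (∀ ⦃x y : C⦄ (f : x ⟶ y) (F F' : FdFact deg f), FdZigzag deg F F')

/-- The class `C⃖` of basic morphisms that non-strictly lower degree. -/
def Lowering (deg : C → Ordinal.{w}) {x y : C} (f : x ⟶ y) : Prop :=
  Basic deg f ∧ deg y ≤ deg x

/-- The class `C⃗` of basic morphisms that non-strictly raise degree. -/
def Raising (deg : C → Ordinal.{w}) {x y : C} (f : x ⟶ y) : Prop :=
  Basic deg f ∧ deg x ≤ deg y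

/-- In an almost-Reedy category, every morphism factors as a basic non-strictly
degree-lowering morphism followed by a basic non-strictly degree-raising one. -/
theorem almostReedy_factorization (deg : C → Ordinal.{w}) (hC : AlmostReedy deg)
    {x y : C} (f : x ⟶ y) :
    ∃ (z : C) (g : x ⟶ z) (k : z ⟶ y),
      g ≫ k = f ∧ Lowering deg g ∧ Raising deg k := by
  by_cases hb : Basic deg f
  · rcases le_total (deg x) (deg y) with hle | hle
    · exact ⟨x, 𝟙 x, f, Category.id_comp f, ⟨hC.1 x, le_rfl⟩, ⟨hb, hle⟩⟩
    · exact ⟨y, f, 𝟙 y, Category.comp_id f, ⟨hb, hle⟩, ⟨hC.1 y, le_rfl⟩⟩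
  · -- choose a fundamental factorization with minimal intermediate degree
    obtain ⟨F₀⟩ := not_isEmpty_iff.mp hb
    obtain ⟨o, ⟨F, rfl⟩, ho⟩ :=
      Ordinal.lt_wf.has_min (Set.range fun F : FdFact deg f => deg F.z)
        ⟨_, F₀, rfl⟩
    have hmin : ∀ F' : FdFact deg f, ¬ deg F'.z < deg F.z := by
      intro F' h
      exact ho _ ⟨F', rfl⟩ h
    refine ⟨F.z, F.g, F.h, F.fac, ⟨?_, F.lt_src.le⟩, ⟨?_, F.lt_tgt.le⟩⟩
    · constructor
      intro G
      exact hmin ⟨G.z, G.g, G.h ≫ F.h, by rw [← Category.assoc, G.fac, F.fac],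
        G.lt_src, G.lt_tgt.trans F.lt_tgt⟩ G.lt_tgt
    · constructor
      intro G
      exact hmin ⟨G.z, F.g ≫ G.g, G.h, by rw [Category.assoc, G.fac, F.fac],
        G.lt_src.trans F.lt_src, G.lt_tgt⟩ G.lt_src
end

section
/- In an almost-Reedy category, any two fundamental factorizations of the same morphism, of degrees δ and δ', are connected by a zigzag of fundamental factorizations passing only through intermediate factorizations of degree strictly less than max(δ, δ'). -/
/-! Start from any zigzag between `F` and `F'` (the category is almost-Reedy) and push its highest
interior vertices down. At a vertex `G` whose neighbours `P`, `Q` have degree `≤ deg G`, the two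
connecting morphisms either compose, or both point into `G` (resp. both out of `G`). In the latter
case each of them, unless it is a basic level morphism and hence an identity, factors through a
fundamental factorization of `G.g` (resp. `G.h`); these are connected by the almost-Reedy hypothesis
applied to `G.g` (resp. `G.h`), and all of them have degree `< deg G`. Well-founded induction on the
largest degree occurring on the zigzag finishes the proof. -/

open CategoryTheory Category

universe w v u

variable {C : Type u} [Category.{v} C]

open Relation

section Zigzag

variable {V α : Type*} [LinearOrder α]

/-- A walk from `a` to `b` along `r` whose interior vertices have degree `< c`, encoded as a run of
steps into vertices of degree `< c` followed by at most one more step. -/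
def ZigzagBelow (r : V → V → Prop) (deg : V → α) (c : α) (a b : V) : Prop :=
  ∃ w, ReflTransGen (fun u v => r u v ∧ deg v < c) a w ∧ ReflGen r w b

def PeakReducible (r : V → V → Prop) (deg : V → α) : Prop :=
  ∀ p g q, r p g → r g q → deg p ≤ deg g → deg q ≤ deg g → ZigzagBelow r deg (deg g) p q

variable {r : V → V → Prop} {deg : V → α} {c : α} {a b m : V}

namespace ZigzagBelow

theorem refl (a : V) : ZigzagBelow r deg c a a := ⟨a, .refl, .refl⟩

theorem of_rel (h : r a b) : ZigzagBelow r deg c a b := ⟨a, .refl, .single h⟩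

theorem mono {c' : α} (hc : c ≤ c') (h : ZigzagBelow r deg c a b) :
    ZigzagBelow r deg c' a b :=
  let ⟨w, haw, hwb⟩ := h
  ⟨w, ReflTransGen.mono (fun _ _ huv => ⟨huv.1, huv.2.trans_le hc⟩) _ _ haw, hwb⟩

theorem reflTransGen_of_lt (h : ZigzagBelow r deg c a b) (hb : deg b < c) :
    ReflTransGen (fun u v => r u v ∧ deg v < c) a b := by
  obtain ⟨w, haw, _ | hwb⟩ := h
  · exact haw
  · exact haw.tail ⟨hwb, hb⟩

theorem trans (ham : ZigzagBelow r deg c a m) (hm : deg m < c) (hmb : ZigzagBelow r deg c m b) :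
    ZigzagBelow r deg c a b :=
  let ⟨w, hmw, hwb⟩ := hmb
  ⟨w, (ham.reflTransGen_of_lt hm).trans hmw, hwb⟩

theorem eq_or_exists_rel (h : ZigzagBelow r deg c a b) :
    a = b ∨ ∃ u, r a u ∧ (u = b ∨ deg u < c) ∧ ZigzagBelow r deg c u b := by
  obtain ⟨w, haw, hwb⟩ := h
  rcases haw.cases_head with rfl | ⟨u, ⟨hau, hu⟩, huw⟩
  · rcases hwb with _ | hab
    · exact .inl rfl
    · exact .inr ⟨b, hab, .inl rfl, refl b⟩
  · exact .inr ⟨u, hau, .inr hu, w, huw, hwb⟩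

theorem reflTransGen_subtype (h : ZigzagBelow r deg c a b) :
    ReflTransGen (fun u v : {x // deg x < c ∨ x = a ∨ x = b} => r u.1 v.1)
      ⟨a, .inr (.inl rfl)⟩ ⟨b, .inr (.inr rfl)⟩ := by
  obtain ⟨w, haw, hwb⟩ := h
  have lift : ∀ {v}, ReflTransGen (fun u v => r u v ∧ deg v < c) a v →
      ∃ hv, ReflTransGen (fun u v : {x // deg x < c ∨ x = a ∨ x = b} => r u.1 v.1)
        ⟨a, .inr (.inl rfl)⟩ ⟨v, hv⟩ := by
    intro v hav
    induction hav with
    | refl => exact ⟨_, .refl⟩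
    | tail _ huv ih =>
      obtain ⟨_, ih⟩ := ih
      exact ⟨.inl huv.2, ih.tail huv.1⟩
  obtain ⟨_, haw⟩ := lift haw
  rcases hwb with _ | hwb
  · exact haw
  · exact haw.tail hwb

end ZigzagBelow

theorem le_of_reflTransGen_le (ha : deg a ≤ c)
    (h : ReflTransGen (fun u v => r u v ∧ deg v ≤ c) a b) : deg b ≤ c := by
  induction h with
  | refl => exact ha
  | tail _ hvw => exact hvw.2

theorem exists_reflTransGen_le {p : V → Prop} (ha : p a)
    (h : ReflTransGen (fun u v => r u v ∧ p v) a b) :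
    ∃ m, p m ∧ deg a ≤ deg m ∧ ReflTransGen (fun u v => r u v ∧ deg v ≤ deg m) a b := by
  induction h with
  | refl => exact ⟨a, ha, le_rfl, .refl⟩
  | @tail v w _ hvw ih =>
    obtain ⟨m, hm, ham, hav⟩ := ih
    rcases le_total (deg w) (deg m) with hwm | hmw
    · exact ⟨m, hm, ham, hav.tail ⟨hvw.1, hwm⟩⟩
    · exact ⟨w, hvw.2, ham.trans hmw,
        (ReflTransGen.mono (fun _ _ huv => ⟨huv.1, huv.2.trans hmw⟩) _ _ hav).tail ⟨hvw.1, le_rfl⟩⟩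

theorem zigzagBelow_of_reflTransGen_le (hr : PeakReducible r deg) (ha : deg a ≤ c)
    (h : ReflTransGen (fun u v => r u v ∧ deg v ≤ c) a b) : ZigzagBelow r deg c a b := by
  -- Absorb the walk into the zigzag from its end: each vertex of degree `c` met on the way is a
  -- peak between its predecessor and the first vertex of the zigzag built so far.
  suffices ∀ w, ReflTransGen (fun u v => r u v ∧ deg v ≤ c) a w →
      ∀ b, ZigzagBelow r deg c w b → deg b ≤ c → ZigzagBelow r deg c a b from
    this b h b (.refl b) (le_of_reflTransGen_le ha h)
  intro w haw
  induction haw with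
  | refl => exact fun _ hab _ => hab
  | @tail v w hav hvwc ih =>
    intro b hwb hb
    obtain ⟨hvw, hwc⟩ := hvwc
    refine ih b ?_ hb
    rcases hwc.lt_or_eq with hw | hw
    · exact (ZigzagBelow.of_rel hvw).trans hw hwb
    rcases hwb.eq_or_exists_rel with rfl | ⟨u, hwu, hu, hub⟩
    · exact .of_rel hvw
    have hvu := hw ▸ hr v w u hvw hwu (hw ▸ le_of_reflTransGen_le ha hav)
      (hw ▸ hu.elim (fun hub => hub ▸ hb) le_of_lt)
    rcases hu with rfl | hu
    · exact hvu
    · exact hvu.trans hu hub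

theorem zigzagBelow_max_of_reflTransGen_le [WellFoundedLT α] (hr : PeakReducible r deg) (c : α) :
    ∀ {a b}, deg a ≤ c → ReflTransGen (fun u v => r u v ∧ deg v ≤ c) a b →
      ZigzagBelow r deg (max (deg a) (deg b)) a b := by
  induction c using WellFoundedLT.induction with
  | _ c ih =>
  intro a b ha h
  have hab := zigzagBelow_of_reflTransGen_le hr ha h
  rcases le_or_gt c (max (deg a) (deg b)) with hc | hc
  · exact hab.mono hc
  -- The walk now runs through degrees `< c`; its largest degree is the next, lower, level.
  obtain ⟨m, hmc, ham, hm⟩ := exists_reflTransGen_le (deg := deg) (p := (deg · < c))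
    ((le_max_left _ _).trans_lt hc) (hab.reflTransGen_of_lt ((le_max_right _ _).trans_lt hc))
  exact ih _ hmc ham hm

theorem zigzagBelow_max_of_reflTransGen [WellFoundedLT α] (hr : PeakReducible r deg)
    (h : ReflTransGen r a b) : ZigzagBelow r deg (max (deg a) (deg b)) a b := by
  obtain ⟨m, -, ham, hm⟩ := exists_reflTransGen_le (deg := deg) (p := fun _ => True) trivial
    (ReflTransGen.mono (fun _ _ huv => ⟨huv, trivial⟩) _ _ h)
  exact zigzagBelow_max_of_reflTransGen_le hr _ ham hm

end Zigzag

theorem FdConn.trans {deg : C → Ordinal.{w}} {x y : C} {f : x ⟶ y} {A B D : FdFact deg f}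
    (hAB : FdConn deg A B) (hBD : FdConn deg B D) : FdConn deg A D :=
  let ⟨k, hkg, hkh⟩ := hAB
  let ⟨l, hlg, hlh⟩ := hBD
  ⟨k ≫ l, by rw [← assoc, hkg, hlg], by rw [assoc, hlh, hkh]⟩

namespace FdFact

variable {deg : C → Ordinal.{w}} {x y : C} {f : x ⟶ y}

def refineLeft (G : FdFact deg f) (H : FdFact deg G.g) : FdFact deg f where
  z := H.z
  g := H.g
  h := H.h ≫ G.h
  fac := by rw [← assoc, H.fac, G.fac]
  lt_src := H.lt_src
  lt_tgt := H.lt_tgt.trans G.lt_tgt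

def refineRight (G : FdFact deg f) (H : FdFact deg G.h) : FdFact deg f where
  z := H.z
  g := G.g ≫ H.g
  h := H.h
  fac := by rw [assoc, H.fac, G.fac]
  lt_src := H.lt_src.trans G.lt_src
  lt_tgt := H.lt_tgt

theorem _root_.FdConn.refineLeft {G : FdFact deg f} {H H' : FdFact deg G.g}
    (h : FdConn deg H H') : FdConn deg (G.refineLeft H) (G.refineLeft H') := by
  obtain ⟨k, hkg, hkh⟩ := h
  exact ⟨k, hkg, show k ≫ H'.h ≫ G.h = H.h ≫ G.h by rw [← hkh, assoc]⟩

theorem _root_.FdConn.refineRight {G : FdFact deg f} {H H' : FdFact deg G.h}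
    (h : FdConn deg H H') : FdConn deg (G.refineRight H) (G.refineRight H') := by
  obtain ⟨k, hkg, hkh⟩ := h
  exact ⟨k, show (G.g ≫ H.g) ≫ k = G.g ≫ H'.g by rw [assoc, hkg], hkh⟩

theorem reflTransGen_refineLeft (hC : AlmostReedy deg) (G : FdFact deg f) (H H' : FdFact deg G.g) :
    ReflTransGen (fun u v => SymmGen (FdConn deg) u v ∧ deg v.z < deg G.z)
      (G.refineLeft H) (G.refineLeft H') :=
  ReflTransGen.lift G.refineLeft (r := SymmGen (FdConn deg))
    (fun _ K h => ⟨h.imp FdConn.refineLeft FdConn.refineLeft, K.lt_tgt⟩) _ _ (hC.2.2 G.g H H')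

theorem reflTransGen_refineRight (hC : AlmostReedy deg) (G : FdFact deg f)
    (H H' : FdFact deg G.h) :
    ReflTransGen (fun u v => SymmGen (FdConn deg) u v ∧ deg v.z < deg G.z)
      (G.refineRight H) (G.refineRight H') :=
  ReflTransGen.lift G.refineRight (r := SymmGen (FdConn deg))
    (fun _ K h => ⟨h.imp FdConn.refineRight FdConn.refineRight, K.lt_src⟩) _ _ (hC.2.2 G.h H H')

theorem eq_of_basic_conn (hC : AlmostReedy deg) {P G : FdFact deg f} (k : P.z ⟶ G.z)
    (hkg : P.g ≫ k = G.g) (hkh : k ≫ G.h = P.h) (hdeg : deg P.z = deg G.z) (hk : Basic deg k) :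
    P = G := by
  obtain ⟨hz, hk⟩ := hC.2.1 k hdeg hk
  obtain ⟨z, g, h, _⟩ := P
  obtain ⟨z', g', h', _⟩ := G
  dsimp only at k hz hk hkg hkh
  subst hz
  rw [eq_of_heq hk, comp_id] at hkg
  rw [eq_of_heq hk, id_comp] at hkh
  subst hkg hkh
  rfl

theorem eq_or_conn_refineLeft (hC : AlmostReedy deg) {P G : FdFact deg f} (hPG : FdConn deg P G)
    (hle : deg P.z ≤ deg G.z) : P = G ∨ ∃ H : FdFact deg G.g, FdConn deg P (G.refineLeft H) := by
  obtain ⟨k, hkg, hkh⟩ := hPG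
  rcases hle.lt_or_eq with hlt | heq
  · exact .inr ⟨⟨P.z, P.g, k, hkg, P.lt_src, hlt⟩, 𝟙 _, comp_id _, by simp [refineLeft, hkh]⟩
  by_cases hk : Basic deg k
  · exact .inl (eq_of_basic_conn hC k hkg hkh heq hk)
  obtain ⟨K⟩ := not_isEmpty_iff.mp hk
  exact .inr ⟨⟨K.z, P.g ≫ K.g, K.h, by rw [assoc, K.fac, hkg], K.lt_src.trans P.lt_src, K.lt_tgt⟩,
    K.g, rfl, by simp only [refineLeft, ← assoc, K.fac, hkh]⟩

theorem eq_or_conn_refineRight (hC : AlmostReedy deg) {P G : FdFact deg f} (hGP : FdConn deg G P)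
    (hle : deg P.z ≤ deg G.z) : P = G ∨ ∃ H : FdFact deg G.h, FdConn deg (G.refineRight H) P := by
  obtain ⟨k, hkg, hkh⟩ := hGP
  rcases hle.lt_or_eq with hlt | heq
  · exact .inr ⟨⟨P.z, k, P.h, hkh, hlt, P.lt_tgt⟩, 𝟙 _, by simp [refineRight, hkg], id_comp _⟩
  by_cases hk : Basic deg k
  · exact .inl (eq_of_basic_conn hC k hkg hkh heq.symm hk).symm
  obtain ⟨K⟩ := not_isEmpty_iff.mp hk
  exact .inr ⟨⟨K.z, K.g, K.h ≫ P.h, by rw [← assoc, K.fac, hkh], K.lt_src, K.lt_tgt.trans P.lt_tgt⟩,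
    K.h, by simp only [refineRight, assoc, K.fac, hkg], rfl⟩

theorem zigzagBelow_of_cospan (hC : AlmostReedy deg) {P G Q : FdFact deg f}
    (hPG : FdConn deg P G) (hQG : FdConn deg Q G) (hP : deg P.z ≤ deg G.z)
    (hQ : deg Q.z ≤ deg G.z) :
    ZigzagBelow (SymmGen (FdConn deg)) (fun H => deg H.z) (deg G.z) P Q := by
  rcases eq_or_conn_refineLeft hC hPG hP with rfl | ⟨H, hH⟩
  · exact .of_rel (.of_rel_symm hQG)
  rcases eq_or_conn_refineLeft hC hQG hQ with rfl | ⟨H', hH'⟩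
  · exact .of_rel (.of_rel hPG)
  exact ⟨G.refineLeft H', (ReflTransGen.single ⟨.of_rel hH, H.lt_tgt⟩).trans
    (reflTransGen_refineLeft hC G H H'), .single (.of_rel_symm hH')⟩

theorem zigzagBelow_of_span (hC : AlmostReedy deg) {P G Q : FdFact deg f}
    (hGP : FdConn deg G P) (hGQ : FdConn deg G Q) (hP : deg P.z ≤ deg G.z)
    (hQ : deg Q.z ≤ deg G.z) :
    ZigzagBelow (SymmGen (FdConn deg)) (fun H => deg H.z) (deg G.z) P Q := by
  rcases eq_or_conn_refineRight hC hGP hP with rfl | ⟨H, hH⟩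
  · exact .of_rel (.of_rel hGQ)
  rcases eq_or_conn_refineRight hC hGQ hQ with rfl | ⟨H', hH'⟩
  · exact .of_rel (.of_rel_symm hGP)
  exact ⟨G.refineRight H', (ReflTransGen.single ⟨.of_rel_symm hH, H.lt_src⟩).trans
    (reflTransGen_refineRight hC G H H'), .single (.of_rel hH')⟩

theorem peakReducible (hC : AlmostReedy deg) :
    PeakReducible (SymmGen (FdConn deg)) (fun G : FdFact deg f => deg G.z) := by
  rintro P G Q (hPG | hGP) (hGQ | hQG) hP hQ
  · exact .of_rel (.of_rel (hPG.trans hGQ))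
  · exact zigzagBelow_of_cospan hC hPG hQG hP hQ
  · exact zigzagBelow_of_span hC hGP hGQ hP hQ
  · exact .of_rel (.of_rel_symm (hQG.trans hGP))

end FdFact

/-- In an almost-Reedy category, two fundamental factorizations of the same
morphism, of degrees `δ` and `δ'`, are connected by a zigzag of fundamental
factorizations passing only through intermediate factorizations of degree
strictly less than `max δ δ'`. -/
theorem almostReedy_bounded_zigzag (deg : C → Ordinal.{w}) (hC : AlmostReedy deg)
    {x y : C} (f : x ⟶ y) (F F' : FdFact deg f) :
    Relation.ReflTransGen
      (fun a b : {G : FdFact deg f //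
          deg G.z < max (deg F.z) (deg F'.z) ∨ G = F ∨ G = F'} =>
        FdConn deg a.1 b.1 ∨ FdConn deg b.1 a.1)
      ⟨F, Or.inr (Or.inl rfl)⟩ ⟨F', Or.inr (Or.inr rfl)⟩ :=
  (zigzagBelow_max_of_reflTransGen (FdFact.peakReducible hC) (hC.2.2 f F F')).reflTransGen_subtype
end

section
/- In an almost-Reedy category, the factorization of any morphism f as f = h ∘ g with g basic degree-nonincreasing and h basic degree-nondecreasing is unique. -/
/-!
A (C⃖, C⃗)-factorization of a non-basic morphism is a fundamental factorization with basic legs,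
and such a factorization is a local minimum of the degree in the connected category of
fundamental factorizations. Take a zigzag joining two of them whose vertices have degree at
most `β`; its vertices of degree exactly `β` can be bypassed through vertices of smaller degree.
An edge between two vertices of degree `β` is an identity or factors through smaller degree, and
a peak (valley) at `W` is replaced by the lift of a zigzag of fundamental factorizations of the
second (first) leg of `W`, which exists by connectedness. Induction on `β` collapses the zigzag.
A basic morphism only has the trivial factorizations through its domain and its codomain.
-/

open CategoryTheory Category

universe w v u

variable {C : Type u} [Category.{v} C]

namespace FdFact

open Relation Set

variable {deg : C → Ordinal.{w}} {x y : C} {f : x ⟶ y}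

def Adj (V W : FdFact deg f) : Prop :=
  FdConn deg V W ∨ FdConn deg W V

theorem Adj.symm {V W : FdFact deg f} (h : Adj V W) : Adj W V :=
  Or.symm h

def ZigzagIn (s : Set Ordinal.{w}) : FdFact deg f → FdFact deg f → Prop :=
  ReflTransGen fun V W => Adj V W ∧ deg V.z ∈ s ∧ deg W.z ∈ s

theorem ZigzagIn.mono {s t : Set Ordinal.{w}} (hst : s ⊆ t) {V W : FdFact deg f}
    (h : ZigzagIn s V W) : ZigzagIn t V W :=
  ReflTransGen.mono (fun _ _ hVW => ⟨hVW.1, hst hVW.2.1, hst hVW.2.2⟩) _ _ h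

theorem ZigzagIn.symm {s : Set Ordinal.{w}} {V W : FdFact deg f} (h : ZigzagIn s V W) :
    ZigzagIn s W V := by
  induction h with
  | refl => exact .refl
  | tail _ hVW ih => exact ih.head ⟨hVW.1.symm, hVW.2.2, hVW.2.1⟩

theorem zigzagIn_Iio_of_fdZigzag {V W : FdFact deg f} (h : FdZigzag deg V W) :
    ZigzagIn (Iio (deg x)) V W :=
  ReflTransGen.mono (fun V W hVW => ⟨hVW, V.lt_src, W.lt_src⟩) _ _ h

theorem ZigzagIn.exists_Iic_of_Iio {β : Ordinal.{w}} {U V : FdFact deg f}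
    (h : ZigzagIn (Iio β) U V) (hU : deg U.z < β) : ∃ γ < β, ZigzagIn (Iic γ) U V := by
  induction h with
  | refl => exact ⟨deg U.z, hU, .refl⟩
  | @tail V W _ hVW ih =>
    obtain ⟨γ, hγ, hUV⟩ := ih
    refine ⟨max γ (max (deg V.z) (deg W.z)), max_lt hγ (max_lt hVW.2.1 hVW.2.2), ?_⟩
    refine (hUV.mono (Iic_subset_Iic.mpr (le_max_left _ _))).tail ⟨hVW.1, ?_, ?_⟩
    · exact mem_Iic.mpr (le_max_of_le_right (le_max_left _ _))
    · exact mem_Iic.mpr (le_max_of_le_right (le_max_right _ _))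

theorem eq_of_conn_of_basic (hC : AlmostReedy deg) {V W : FdFact deg f}
    (hVW : deg V.z = deg W.z) {m : V.z ⟶ W.z} (hg : V.g ≫ m = W.g) (hh : m ≫ W.h = V.h)
    (hm : Basic deg m) : V = W := by
  obtain ⟨hz, hid⟩ := hC.2.1 m hVW hm
  obtain ⟨z, g, h, _, _, _⟩ := V
  obtain ⟨z', g', h', _, _, _⟩ := W
  dsimp only at hz hg hh ⊢
  subst hz
  obtain rfl := eq_of_heq hid
  rw [comp_id] at hg
  rw [id_comp] at hh
  subst hg hh
  rfl

/-- A basic connecting morphism between vertices of equal degree is an identity; a non-basic one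
factors through smaller degree. -/
theorem eq_or_exists_lt_of_conn (hC : AlmostReedy deg) {V W : FdFact deg f}
    (hVW : FdConn deg V W) (hdeg : deg V.z = deg W.z) :
    V = W ∨ ∃ M : FdFact deg f, deg M.z < deg V.z ∧ FdConn deg V M ∧ FdConn deg M W := by
  obtain ⟨m, hg, hh⟩ := hVW
  by_cases hm : Basic deg m
  · exact .inl (eq_of_conn_of_basic hC hdeg hg hh hm)
  obtain ⟨Q⟩ := not_isEmpty_iff.mp hm
  refine .inr ⟨⟨Q.z, V.g ≫ Q.g, Q.h ≫ W.h, ?_, Q.lt_src.trans V.lt_src,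
    Q.lt_tgt.trans W.lt_tgt⟩, Q.lt_src, ⟨Q.g, rfl, ?_⟩, ⟨Q.h, ?_, rfl⟩⟩
  · rw [assoc, reassoc_of% Q.fac, hh, V.fac]
  · rw [reassoc_of% Q.fac, hh]
  · rw [assoc, Q.fac, hg]

theorem Adj.eq_or_exists_lt (hC : AlmostReedy deg) {V W : FdFact deg f} (hVW : Adj V W)
    (hdeg : deg V.z = deg W.z) :
    V = W ∨ ∃ M : FdFact deg f, deg M.z < deg V.z ∧ Adj V M ∧ Adj M W := by
  rcases hVW with hVW | hWV
  · obtain rfl | ⟨M, hM, hVM, hMW⟩ := eq_or_exists_lt_of_conn hC hVW hdeg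
    · exact .inl rfl
    · exact .inr ⟨M, hM, .inl hVM, .inl hMW⟩
  · obtain rfl | ⟨M, hM, hWM, hMV⟩ := eq_or_exists_lt_of_conn hC hWV hdeg.symm
    · exact .inl rfl
    · exact .inr ⟨M, hdeg ▸ hM, .inr hMV, .inr hWM⟩

/-- A neighbour of smaller degree would give a fundamental factorization of a leg of `F`. -/
theorem deg_le_of_adj {F W : FdFact deg f} (hg : Basic deg F.g) (hh : Basic deg F.h)
    (hFW : Adj F W) : deg F.z ≤ deg W.z := by
  by_contra! hlt
  rcases hFW with ⟨m, -, hm⟩ | ⟨m, hm, -⟩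
  · exact hh.false ⟨W.z, m, W.h, hm, hlt, W.lt_tgt⟩
  · exact hg.false ⟨W.z, W.g, m, hm, W.lt_src, hlt⟩

def liftG (W : FdFact deg f) (Y : FdFact deg W.g) : FdFact deg f where
  z := Y.z
  g := Y.g
  h := Y.h ≫ W.h
  fac := by rw [reassoc_of% Y.fac, W.fac]
  lt_src := Y.lt_src
  lt_tgt := Y.lt_tgt.trans W.lt_tgt

def liftH (W : FdFact deg f) (Y : FdFact deg W.h) : FdFact deg f where
  z := Y.z
  g := W.g ≫ Y.g
  h := Y.h
  fac := by rw [assoc, Y.fac, W.fac]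
  lt_src := Y.lt_src.trans W.lt_src
  lt_tgt := Y.lt_tgt

theorem zigzagIn_liftG (W : FdFact deg f) {Y Y' : FdFact deg W.g} (h : FdZigzag deg Y Y') :
    ZigzagIn (Iio (deg W.z)) (W.liftG Y) (W.liftG Y') := by
  refine ReflTransGen.lift W.liftG (fun V V' hVV' => ⟨?_, V.lt_tgt, V'.lt_tgt⟩) _ _ h
  rcases hVV' with ⟨m, hg, hh⟩ | ⟨m, hg, hh⟩
  · exact .inl ⟨m, hg, by simp only [liftG, reassoc_of% hh]⟩
  · exact .inr ⟨m, hg, by simp only [liftG, reassoc_of% hh]⟩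

theorem zigzagIn_liftH (W : FdFact deg f) {Y Y' : FdFact deg W.h} (h : FdZigzag deg Y Y') :
    ZigzagIn (Iio (deg W.z)) (W.liftH Y) (W.liftH Y') := by
  refine ReflTransGen.lift W.liftH (fun V V' hVV' => ⟨?_, V.lt_src, V'.lt_src⟩) _ _ h
  rcases hVV' with ⟨m, hg, hh⟩ | ⟨m, hg, hh⟩
  · exact .inl ⟨m, by simp only [liftH, assoc, hg], hh⟩
  · exact .inr ⟨m, by simp only [liftH, assoc, hg], hh⟩

theorem exists_liftG_eq_of_conn {A W : FdFact deg f} (hAW : FdConn deg A W)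
    (hlt : deg A.z < deg W.z) : ∃ Y : FdFact deg W.g, W.liftG Y = A := by
  obtain ⟨m, hg, hh⟩ := hAW
  exact ⟨⟨A.z, A.g, m, hg, A.lt_src, hlt⟩, by simp only [liftG, hh]⟩

theorem exists_liftH_eq_of_conn {A W : FdFact deg f} (hWA : FdConn deg W A)
    (hlt : deg A.z < deg W.z) : ∃ Y : FdFact deg W.h, W.liftH Y = A := by
  obtain ⟨m, hg, hh⟩ := hWA
  exact ⟨⟨A.z, m, A.h, hh, hlt, A.lt_tgt⟩, by simp only [liftH, hg]⟩

/-- Two neighbours of `W` of smaller degree are joined below `W`: directly by composing when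
`W` is passed through, and by a lifted zigzag of factorizations of `W.g` (resp. `W.h`) when `W`
is a valley (resp. a peak). -/
theorem zigzagIn_Iio_of_adj_of_adj (hC : AlmostReedy deg) {A W B : FdFact deg f}
    (hA : deg A.z < deg W.z) (hB : deg B.z < deg W.z) (hAW : Adj A W) (hWB : Adj W B) :
    ZigzagIn (Iio (deg W.z)) A B := by
  rcases hAW with ⟨a, ha₁, ha₂⟩ | hWA <;> rcases hWB with hWB | ⟨b, hb₁, hb₂⟩
  · obtain ⟨b, hb₁, hb₂⟩ := hWB
    refine .single ⟨.inl ⟨a ≫ b, ?_, ?_⟩, hA, hB⟩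
    · rw [← assoc, ha₁, hb₁]
    · rw [assoc, hb₂, ha₂]
  · obtain ⟨YA, rfl⟩ := exists_liftG_eq_of_conn ⟨a, ha₁, ha₂⟩ hA
    obtain ⟨YB, rfl⟩ := exists_liftG_eq_of_conn ⟨b, hb₁, hb₂⟩ hB
    exact W.zigzagIn_liftG (hC.2.2 W.g YA YB)
  · obtain ⟨YA, rfl⟩ := exists_liftH_eq_of_conn hWA hA
    obtain ⟨YB, rfl⟩ := exists_liftH_eq_of_conn hWB hB
    exact W.zigzagIn_liftH (hC.2.2 W.h YA YB)
  · obtain ⟨a, ha₁, ha₂⟩ := hWA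
    refine .single ⟨.inr ⟨b ≫ a, ?_, ?_⟩, hA, hB⟩
    · rw [← assoc, hb₁, ha₁]
    · rw [assoc, ha₂, hb₂]

/-- Along the zigzag we keep a vertex `A` of degree `< β`, reached from `U` below `β`, that is the
current vertex or adjacent to it. -/
theorem ZigzagIn.Iio_of_Iic (hC : AlmostReedy deg) {β : Ordinal.{w}} {U U' : FdFact deg f}
    (h : ZigzagIn (Iic β) U U') (hU : deg U.z < β) (hU' : deg U'.z < β) :
    ZigzagIn (Iio β) U U' := by
  suffices ∀ V, ZigzagIn (Iic β) U V →
      ∃ A : FdFact deg f, deg A.z < β ∧ ZigzagIn (Iio β) U A ∧ (A = V ∨ Adj A V) by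
    obtain ⟨A, hA, hUA, rfl | hAU'⟩ := this U' h
    · exact hUA
    · exact hUA.tail ⟨hAU', hA, hU'⟩
  intro V hUV
  induction hUV with
  | refl => exact ⟨U, hU, .refl, .inl rfl⟩
  | @tail V W _ hVW ih =>
    obtain ⟨A, hA, hUA, hAV⟩ := ih
    obtain ⟨hVW, hVβ, hWβ⟩ := hVW
    rcases (mem_Iic.mp hVβ).lt_or_eq with hV | rfl
    · obtain rfl | hAV := hAV
      · exact ⟨A, hA, hUA, .inr hVW⟩
      · exact ⟨V, hV, hUA.tail ⟨hAV, hA, hV⟩, .inr hVW⟩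
    obtain rfl | hAV := hAV
    · exact absurd hA (lt_irrefl _)
    rcases (mem_Iic.mp hWβ).lt_or_eq with hW | hW
    · exact ⟨W, hW, hUA.trans (zigzagIn_Iio_of_adj_of_adj hC hA hW hAV hVW), .inl rfl⟩
    obtain rfl | ⟨M, hM, hVM, hMW⟩ := hVW.eq_or_exists_lt hC hW.symm
    · exact ⟨A, hA, hUA, .inr hAV⟩
    · exact ⟨M, hM, hUA.trans (zigzagIn_Iio_of_adj_of_adj hC hA hM hAV hVM), .inr hMW⟩

theorem ZigzagIn.eq_of_basic_of_le (hC : AlmostReedy deg) {β : Ordinal.{w}} {F V : FdFact deg f}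
    (hg : Basic deg F.g) (hh : Basic deg F.h) (hβ : β ≤ deg F.z) (h : ZigzagIn (Iic β) F V) :
    V = F := by
  induction h with
  | refl => rfl
  | tail _ hVW ih =>
    obtain rfl := ih
    obtain ⟨hFW, -, hWβ⟩ := hVW
    have hle := deg_le_of_adj hg hh hFW
    obtain rfl | ⟨M, hM, hFM, -⟩ := hFW.eq_or_exists_lt hC
      (le_antisymm hle ((mem_Iic.mp hWβ).trans hβ))
    · rfl
    · exact absurd (deg_le_of_adj hg hh hFM) (not_le.mpr hM)

theorem eq_of_zigzagIn_Iic (hC : AlmostReedy deg) {F F' : FdFact deg f}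
    (hg : Basic deg F.g) (hh : Basic deg F.h) (hg' : Basic deg F'.g) (hh' : Basic deg F'.h)
    (β : Ordinal.{w}) (h : ZigzagIn (Iic β) F F') : F = F' := by
  induction β using WellFoundedLT.induction with
  | _ β ih =>
  by_cases hF : deg F.z < β
  · by_cases hF' : deg F'.z < β
    · obtain ⟨γ, hγ, hFF'⟩ := (h.Iio_of_Iic hC hF hF').exists_Iic_of_Iio hF
      exact ih γ hγ hFF'
    · exact h.symm.eq_of_basic_of_le hC hg' hh' (not_lt.mp hF')
  · exact (h.eq_of_basic_of_le hC hg hh (not_lt.mp hF)).symm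

theorem eq_of_basic (hC : AlmostReedy deg) {F F' : FdFact deg f}
    (hg : Basic deg F.g) (hh : Basic deg F.h) (hg' : Basic deg F'.g) (hh' : Basic deg F'.h) :
    F = F' := by
  obtain ⟨β, -, h⟩ := (zigzagIn_Iio_of_fdZigzag (hC.2.2 f F F')).exists_Iic_of_Iio F.lt_src
  exact eq_of_zigzagIn_Iic hC hg hh hg' hh' β h

end FdFact

namespace CategoryTheory.Factorisation

variable {deg : C → Ordinal.{w}} {x y : C} {f : x ⟶ y}

def toFdFact (F : Factorisation f) (hx : deg F.mid < deg x) (hy : deg F.mid < deg y) :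
    FdFact deg f :=
  ⟨F.mid, F.ι, F.π, F.ι_π, hx, hy⟩

theorem eq_initial_or_eq_terminal (hC : AlmostReedy deg) (F : Factorisation f)
    (hι : Lowering deg F.ι) (hπ : Raising deg F.π)
    (h : ¬(deg F.mid < deg x ∧ deg F.mid < deg y)) :
    F = .initial ∨ F = .terminal := by
  obtain ⟨mid, ι, π, hιπ⟩ := F
  rcases not_and_or.mp h with hx | hy
  · obtain ⟨rfl, hι⟩ := hC.2.1 ι (le_antisymm (not_lt.mp hx) hι.2) hι.1
    obtain rfl := eq_of_heq hι
    rw [id_comp] at hιπ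
    subst hιπ
    exact .inl rfl
  · obtain ⟨rfl, hπ⟩ := hC.2.1 π (le_antisymm hπ.2 (not_lt.mp hy)) hπ.1
    obtain rfl := eq_of_heq hπ
    rw [comp_id] at hιπ
    subst hιπ
    exact .inr rfl

theorem initial_eq_terminal (hC : AlmostReedy deg) (hf : Basic deg f) (hxy : deg x = deg y) :
    (.initial : Factorisation f) = .terminal := by
  obtain ⟨rfl, hf⟩ := hC.2.1 f hxy hf
  obtain rfl := eq_of_heq hf
  rfl

theorem eq_of_lowering_of_raising (hC : AlmostReedy deg) {F F' : Factorisation f}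
    (hι : Lowering deg F.ι) (hπ : Raising deg F.π)
    (hι' : Lowering deg F'.ι) (hπ' : Raising deg F'.π) : F = F' := by
  by_cases hf : Basic deg f
  · have initial_or_terminal (G : Factorisation f) (hι : Lowering deg G.ι) (hπ : Raising deg G.π) :
        G = .initial ∨ G = .terminal :=
      G.eq_initial_or_eq_terminal hC hι hπ fun h => hf.false (G.toFdFact h.1 h.2)
    rcases initial_or_terminal F hι hπ with rfl | rfl <;>
      rcases initial_or_terminal F' hι' hπ' with rfl | rfl
    · rfl
    · exact initial_eq_terminal hC hf (le_antisymm hπ.2 hι'.2)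
    · exact (initial_eq_terminal hC hf (le_antisymm hπ'.2 hι.2)).symm
    · rfl
  · have fundamental (G : Factorisation f) (hι : Lowering deg G.ι) (hπ : Raising deg G.π) :
        deg G.mid < deg x ∧ deg G.mid < deg y := by
      by_contra h
      rcases G.eq_initial_or_eq_terminal hC hι hπ h with rfl | rfl
      exacts [hf hπ.1, hf hι.1]
    obtain ⟨hx, hy⟩ := fundamental F hι hπ
    obtain ⟨hx', hy'⟩ := fundamental F' hι' hπ'
    exact congrArg (fun V : FdFact deg f => (⟨V.z, V.g, V.h, V.fac⟩ : Factorisation f))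
      (FdFact.eq_of_basic hC (F := F.toFdFact hx hy) (F' := F'.toFdFact hx' hy')
        hι.1 hπ.1 hι'.1 hπ'.1)

end CategoryTheory.Factorisation

/-- In an almost-Reedy category, the factorization of a morphism as a basic
non-strictly degree-lowering morphism followed by a basic non-strictly
degree-raising one is unique. -/
theorem almostReedy_factorization_unique (deg : C → Ordinal.{w})
    (hC : AlmostReedy deg) {x y z z' : C} (f : x ⟶ y)
    (g : x ⟶ z) (k : z ⟶ y) (g' : x ⟶ z') (k' : z' ⟶ y)
    (hfac : g ≫ k = f) (hfac' : g' ≫ k' = f)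
    (hg : Lowering deg g) (hk : Raising deg k)
    (hg' : Lowering deg g') (hk' : Raising deg k') :
    z = z' ∧ HEq g g' ∧ HEq k k' :=
  Factorisation.mk.inj <| Factorisation.eq_of_lowering_of_raising hC
    (F := ⟨z, g, k, hfac⟩) (F' := ⟨z', g', k', hfac'⟩) hg hk hg' hk'
end

section
/- A category C with an ordinal degree function on its objects is a Reedy category (in Kan's sense, with the subcategories of degree-raising and degree-lowering morphisms given as data) if and only if C is an almost-Reedy category and the classes C⃗ (basic degree-nondecreasing morphisms) and C⃖ (basic degree-nonincreasing morphisms) are closed under composition. -/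
/-!
The Reedy factorisation of `f` can be computed by refinement: factor both halves of any
factorisation `f = g ≫ h`, then factor the resulting middle map. In a Reedy category uniqueness
forces the result to be the Reedy factorisation of `f`, so that factorisation has minimal middle
degree and is joined to every factorisation by a span; hence `P` and `Mi` are exactly the basic
degree-raising and degree-lowering morphisms, and the almost-Reedy axioms hold.

Conversely, when the basic classes compose, factorisations exist by refining a fundamental
factorisation, by induction on `min (deg x) (deg y)`. For uniqueness, the inductive hypothesis
makes the refinement of a fundamental factorisation invariant under morphisms of factorisations,
hence constant along the zigzags joining any two of them; and a Reedy factorisation of a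
non-basic morphism is itself fundamental and is its own refinement.
-/

open CategoryTheory Category

universe w v u

variable {C : Type u} [Category.{v} C]

/-- Kan's notion of Reedy category, with the subcategories `P = C⃗` (raising)
and `Mi = C⃖` (lowering) given as data: both are wide subcategories, nonidentity
`P`-morphisms strictly raise degree, nonidentity `Mi`-morphisms strictly lower
degree, and every morphism factors uniquely as a `Mi`-morphism followed by a
`P`-morphism. -/
def IsReedyWith (deg : C → Ordinal.{w}) (P Mi : MorphismProperty C) : Prop :=
  (∀ x : C, P (𝟙 x)) ∧ (∀ x : C, Mi (𝟙 x)) ∧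
  (∀ ⦃x y z : C⦄ (f : x ⟶ y) (g : y ⟶ z), P f → P g → P (f ≫ g)) ∧
  (∀ ⦃x y z : C⦄ (f : x ⟶ y) (g : y ⟶ z), Mi f → Mi g → Mi (f ≫ g)) ∧
  (∀ ⦃x y : C⦄ (f : x ⟶ y), P f → deg x < deg y ∨ (x = y ∧ HEq f (𝟙 x))) ∧
  (∀ ⦃x y : C⦄ (f : x ⟶ y), Mi f → deg y < deg x ∨ (x = y ∧ HEq f (𝟙 x))) ∧
  (∀ ⦃x y : C⦄ (f : x ⟶ y), ∃ (z : C) (g : x ⟶ z) (h : z ⟶ y),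
    Mi g ∧ P h ∧ g ≫ h = f ∧
      ∀ (z' : C) (g' : x ⟶ z') (h' : z' ⟶ y), Mi g' → P h' → g' ≫ h' = f →
        z = z' ∧ HEq g g' ∧ HEq h h')

namespace CategoryTheory.Factorisation

variable {X Y : C} {f : X ⟶ Y}

theorem ext_heq {F F' : Factorisation f} (hmid : F.mid = F'.mid) (hι : HEq F.ι F'.ι)
    (hπ : HEq F.π F'.π) : F = F' := by
  cases F; cases F'; cases hmid; cases hι; cases hπ; rfl

theorem eq_initial_of_heq_id {F : Factorisation f} (h : X = F.mid ∧ HEq F.ι (𝟙 X)) :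
    F = .initial := by
  obtain ⟨mid, ι, π, rfl⟩ := F
  obtain ⟨rfl, hι⟩ := h
  obtain rfl := eq_of_heq hι
  exact ext_heq rfl HEq.rfl (heq_of_eq (id_comp π).symm)

theorem eq_terminal_of_heq_id {F : Factorisation f} (h : F.mid = Y ∧ HEq F.π (𝟙 F.mid)) :
    F = .terminal := by
  obtain ⟨mid, ι, π, rfl⟩ := F
  obtain ⟨rfl : mid = Y, hπ⟩ := h
  obtain rfl : π = 𝟙 mid := eq_of_heq hπ
  exact ext_heq rfl (heq_of_eq (comp_id ι).symm) HEq.rfl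

theorem initial_eq_terminal_of_heq_id (h : X = Y ∧ HEq f (𝟙 X)) :
    (.initial : Factorisation f) = .terminal := by
  obtain ⟨rfl, hf⟩ := h
  obtain rfl := eq_of_heq hf
  rfl

def refinement {G : Factorisation f} (A : Factorisation G.ι) (B : Factorisation G.π)
    (M : Factorisation (A.π ≫ B.ι)) : Factorisation f where
  mid := M.mid
  ι := A.ι ≫ M.ι
  π := M.π ≫ B.π

def IsLR (L R : MorphismProperty C) (F : Factorisation f) : Prop :=
  L F.ι ∧ R F.π

end CategoryTheory.Factorisation

open Factorisation

variable {deg : C → Ordinal.{w}}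

theorem induction_on_min_deg {motive : ∀ ⦃x y : C⦄, (x ⟶ y) → Prop}
    (step : ∀ ⦃x y : C⦄ (f : x ⟶ y),
      (∀ ⦃a b : C⦄ (u : a ⟶ b), min (deg a) (deg b) < min (deg x) (deg y) → motive u) →
        motive f)
    {x y : C} (f : x ⟶ y) : motive f := by
  suffices ∀ o, ∀ ⦃x y : C⦄ (f : x ⟶ y), min (deg x) (deg y) = o → motive f from this _ f rfl
  intro o
  induction o using WellFoundedLT.induction with
  | _ o IH => rintro x y f rfl; exact step f fun a b u hu => IH _ hu u rfl

namespace FdFact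

variable {x y : C} {f : x ⟶ y}

def toFactorisation (F : FdFact deg f) : Factorisation f := ⟨F.z, F.g, F.h, F.fac⟩

def ofFactorisation (F : Factorisation f) (hx : deg F.mid < deg x) (hy : deg F.mid < deg y) :
    FdFact deg f :=
  ⟨F.mid, F.ι, F.π, F.ι_π, hx, hy⟩

theorem fdConn_of_hom {F F' : FdFact deg f} (k : F.toFactorisation ⟶ F'.toFactorisation) :
    FdConn deg F F' :=
  ⟨k.h, k.ι_h, k.h_π⟩

end FdFact

theorem not_basic_iff_exists_factorisation {x y : C} {f : x ⟶ y} :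
    ¬ Basic deg f ↔ ∃ F : Factorisation f, deg F.mid < deg x ∧ deg F.mid < deg y := by
  rw [Basic, not_isEmpty_iff]
  exact ⟨fun ⟨F⟩ => ⟨F.toFactorisation, F.lt_src, F.lt_tgt⟩,
    fun ⟨F, hx, hy⟩ => ⟨.ofFactorisation F hx hy⟩⟩

theorem FdZigzag.symm {x y : C} {f : x ⟶ y} {F F' : FdFact deg f} (h : FdZigzag deg F F') :
    FdZigzag deg F' F :=
  haveI : Std.Symm fun G G' : FdFact deg f => FdConn deg G G' ∨ FdConn deg G' G :=
    ⟨fun _ _ => Or.symm⟩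
  Std.Symm.symm (r := Relation.ReflTransGen _) _ _ h

namespace IsReedyWith

variable {P Mi : MorphismProperty C} {x y : C} {f : x ⟶ y}

theorem P_id (hR : IsReedyWith deg P Mi) (x : C) : P (𝟙 x) := hR.1 x

theorem Mi_id (hR : IsReedyWith deg P Mi) (x : C) : Mi (𝟙 x) := hR.2.1 x

theorem P_comp (hR : IsReedyWith deg P Mi) {z : C} {g : y ⟶ z} (hf : P f) (hg : P g) :
    P (f ≫ g) :=
  hR.2.2.1 f g hf hg

theorem Mi_comp (hR : IsReedyWith deg P Mi) {z : C} {g : y ⟶ z} (hf : Mi f) (hg : Mi g) :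
    Mi (f ≫ g) :=
  hR.2.2.2.1 f g hf hg

theorem lt_or_heq_id_of_P (hR : IsReedyWith deg P Mi) (hf : P f) :
    deg x < deg y ∨ (x = y ∧ HEq f (𝟙 x)) :=
  hR.2.2.2.2.1 f hf

theorem lt_or_heq_id_of_Mi (hR : IsReedyWith deg P Mi) (hf : Mi f) :
    deg y < deg x ∨ (x = y ∧ HEq f (𝟙 x)) :=
  hR.2.2.2.2.2.1 f hf

theorem deg_le_of_P (hR : IsReedyWith deg P Mi) (hf : P f) : deg x ≤ deg y := by
  rcases hR.lt_or_heq_id_of_P hf with h | ⟨rfl, -⟩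
  exacts [h.le, le_rfl]

theorem deg_le_of_Mi (hR : IsReedyWith deg P Mi) (hf : Mi f) : deg y ≤ deg x := by
  rcases hR.lt_or_heq_id_of_Mi hf with h | ⟨rfl, -⟩
  exacts [h.le, le_rfl]

theorem exists_isLR (hR : IsReedyWith deg P Mi) (f : x ⟶ y) :
    ∃ F : Factorisation f, F.IsLR Mi P := by
  obtain ⟨z, g, h, hg, hh, fac, -⟩ := hR.2.2.2.2.2.2 f
  exact ⟨⟨z, g, h, fac⟩, hg, hh⟩

theorem eq_of_isLR (hR : IsReedyWith deg P Mi) {F F' : Factorisation f} (hF : F.IsLR Mi P)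
    (hF' : F'.IsLR Mi P) : F = F' := by
  obtain ⟨z, g, h, -, -, -, huniq⟩ := hR.2.2.2.2.2.2 f
  obtain ⟨hz, hg, hh⟩ := huniq _ _ _ hF.1 hF.2 F.ι_π
  obtain ⟨hz', hg', hh'⟩ := huniq _ _ _ hF'.1 hF'.2 F'.ι_π
  exact ext_heq (hz.symm.trans hz') (hg.symm.trans hg') (hh.symm.trans hh')

theorem exists_span (hR : IsReedyWith deg P Mi) {F : Factorisation f} (hF : F.IsLR Mi P)
    (G : Factorisation f) :
    ∃ H : Factorisation f, Nonempty (H ⟶ G) ∧ Nonempty (H ⟶ F) ∧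
      deg F.mid ≤ deg H.mid ∧ deg H.mid ≤ deg G.mid := by
  obtain ⟨A, hA⟩ := hR.exists_isLR G.ι
  obtain ⟨B, hB⟩ := hR.exists_isLR G.π
  obtain ⟨M, hM⟩ := hR.exists_isLR (A.π ≫ B.ι)
  obtain rfl : refinement A B M = F :=
    hR.eq_of_isLR ⟨hR.Mi_comp hA.1 hM.1, hR.P_comp hM.2 hB.2⟩ hF
  have hMB : M.ι ≫ M.π ≫ B.π = A.π ≫ G.π := by simp
  exact ⟨⟨A.mid, A.ι, A.π ≫ G.π, by simp⟩, ⟨{ h := A.π }⟩, ⟨{ h := M.ι, h_π := hMB }⟩,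
    hR.deg_le_of_Mi hM.1, hR.deg_le_of_P hA.2⟩

theorem not_basic_iff (hR : IsReedyWith deg P Mi) {F : Factorisation f} (hF : F.IsLR Mi P) :
    ¬ Basic deg f ↔ deg F.mid < deg x ∧ deg F.mid < deg y := by
  refine ⟨fun hf => ?_, fun h => not_basic_iff_exists_factorisation.2 ⟨F, h⟩⟩
  obtain ⟨G, hx, hy⟩ := not_basic_iff_exists_factorisation.1 hf
  obtain ⟨H, -, -, hFH, hHG⟩ := hR.exists_span hF G
  exact ⟨(hFH.trans hHG).trans_lt hx, (hFH.trans hHG).trans_lt hy⟩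

theorem basic_of_P (hR : IsReedyWith deg P Mi) (hf : P f) : Basic deg f :=
  not_not.1 fun h => (((hR.not_basic_iff (F := .initial) ⟨hR.Mi_id x, hf⟩).1 h).1).false

theorem basic_of_Mi (hR : IsReedyWith deg P Mi) (hf : Mi f) : Basic deg f :=
  not_not.1 fun h => (((hR.not_basic_iff (F := .terminal) ⟨hf, hR.P_id y⟩).1 h).2).false

theorem P_or_Mi_of_basic (hR : IsReedyWith deg P Mi) (hf : Basic deg f) : P f ∨ Mi f := by
  obtain ⟨F, hF⟩ := hR.exists_isLR f
  rcases hR.lt_or_heq_id_of_Mi hF.1 with hx | hι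
  · rcases hR.lt_or_heq_id_of_P hF.2 with hy | hπ
    · exact absurd ((hR.not_basic_iff hF).2 ⟨hx, hy⟩) (not_not.2 hf)
    · obtain rfl := eq_terminal_of_heq_id hπ
      exact .inr hF.1
  · obtain rfl := eq_initial_of_heq_id hι
    exact .inl hF.2

theorem raising_iff (hR : IsReedyWith deg P Mi) : Raising deg f ↔ P f := by
  refine ⟨fun ⟨hb, hle⟩ => (hR.P_or_Mi_of_basic hb).elim id fun hf => ?_,
    fun hf => ⟨hR.basic_of_P hf, hR.deg_le_of_P hf⟩⟩
  rcases hR.lt_or_heq_id_of_Mi hf with hlt | ⟨rfl, hid⟩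
  · exact absurd hle hlt.not_ge
  · exact eq_of_heq hid ▸ hR.P_id x

theorem lowering_iff (hR : IsReedyWith deg P Mi) : Lowering deg f ↔ Mi f := by
  refine ⟨fun ⟨hb, hle⟩ => (hR.P_or_Mi_of_basic hb).elim (fun hf => ?_) id,
    fun hf => ⟨hR.basic_of_Mi hf, hR.deg_le_of_Mi hf⟩⟩
  rcases hR.lt_or_heq_id_of_P hf with hlt | ⟨rfl, hid⟩
  · exact absurd hle hlt.not_ge
  · exact eq_of_heq hid ▸ hR.Mi_id x

theorem fdZigzag (hR : IsReedyWith deg P Mi) (F F' : FdFact deg f) : FdZigzag deg F F' := by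
  obtain ⟨F₀, hF₀⟩ := hR.exists_isLR f
  obtain ⟨hx, hy⟩ := (hR.not_basic_iff hF₀).1 fun h => h.false F
  suffices h : ∀ G : FdFact deg f, FdZigzag deg G (.ofFactorisation F₀ hx hy) from
    (h F).trans (h F').symm
  intro G
  obtain ⟨H, ⟨kG⟩, ⟨kF₀⟩, -, hHG⟩ := hR.exists_span hF₀ G.toFactorisation
  let H' : FdFact deg f := .ofFactorisation H (hHG.trans_lt G.lt_src) (hHG.trans_lt G.lt_tgt)
  exact .head (.inr (FdFact.fdConn_of_hom (F := H') kG))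
    (.single (.inl (FdFact.fdConn_of_hom (F := H') kF₀)))

theorem almostReedy (hR : IsReedyWith deg P Mi) : AlmostReedy deg := by
  refine ⟨fun x => hR.basic_of_P (hR.P_id x), fun x y f hxy hf => ?_,
    fun _ _ _ => hR.fdZigzag⟩
  rcases hR.P_or_Mi_of_basic hf with hf | hf
  · exact (hR.lt_or_heq_id_of_P hf).resolve_left hxy.not_lt
  · exact (hR.lt_or_heq_id_of_Mi hf).resolve_left hxy.not_gt

end IsReedyWith

def IsReedyFactorisation (deg : C → Ordinal.{w}) {x y : C} {f : x ⟶ y}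
    (F : Factorisation f) : Prop :=
  Lowering deg F.ι ∧ Raising deg F.π

def ReedyFactorisationUnique (deg : C → Ordinal.{w}) {x y : C} (f : x ⟶ y) : Prop :=
  ∀ F F' : Factorisation f, IsReedyFactorisation deg F → IsReedyFactorisation deg F' → F = F'

def IsReedyRefinement (deg : C → Ordinal.{w}) {x y : C} {f : x ⟶ y}
    (G E : Factorisation f) : Prop :=
  ∃ (A : Factorisation G.ι) (B : Factorisation G.π) (M : Factorisation (A.π ≫ B.ι)),
    IsReedyFactorisation deg A ∧ IsReedyFactorisation deg B ∧ IsReedyFactorisation deg M ∧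
      E = refinement A B M

structure IsClosedAlmostReedy (deg : C → Ordinal.{w}) : Prop where
  almostReedy : AlmostReedy deg
  raising_comp : ∀ ⦃x y z : C⦄ (f : x ⟶ y) (g : y ⟶ z),
    Raising deg f → Raising deg g → Raising deg (f ≫ g)
  lowering_comp : ∀ ⦃x y z : C⦄ (f : x ⟶ y) (g : y ⟶ z),
    Lowering deg f → Lowering deg g → Lowering deg (f ≫ g)

namespace AlmostReedy

variable {x y : C} {f : x ⟶ y}

theorem raising_id (hAR : AlmostReedy deg) (x : C) : Raising deg (𝟙 x) :=
  ⟨hAR.1 x, le_rfl⟩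

theorem lowering_id (hAR : AlmostReedy deg) (x : C) : Lowering deg (𝟙 x) :=
  ⟨hAR.1 x, le_rfl⟩

theorem eq_initial {F : Factorisation f} (hAR : AlmostReedy deg)
    (hF : IsReedyFactorisation deg F) (h : deg F.mid = deg x) : F = .initial :=
  eq_initial_of_heq_id (hAR.2.1 F.ι h.symm hF.1.1)

theorem eq_terminal {F : Factorisation f} (hAR : AlmostReedy deg)
    (hF : IsReedyFactorisation deg F) (h : deg F.mid = deg y) : F = .terminal :=
  eq_terminal_of_heq_id (hAR.2.1 F.π h hF.2.1)

theorem isReedyRefinement_self {F : Factorisation f} (hAR : AlmostReedy deg)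
    (hF : IsReedyFactorisation deg F) : IsReedyRefinement deg F F := by
  refine ⟨.terminal, .initial, ⟨F.mid, 𝟙 _, 𝟙 _, rfl⟩, ⟨hF.1, hAR.raising_id _⟩,
    ⟨hAR.lowering_id _, hF.2⟩, ⟨hAR.lowering_id _, hAR.raising_id _⟩, ?_⟩
  exact ext_heq rfl (heq_of_eq (comp_id F.ι).symm) (heq_of_eq (id_comp F.π).symm)

theorem deg_mid_lt_of_not_basic {F : Factorisation f} (hAR : AlmostReedy deg)
    (hf : ¬ Basic deg f) (hF : IsReedyFactorisation deg F) :
    deg F.mid < deg x ∧ deg F.mid < deg y := by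
  refine ⟨hF.1.2.lt_of_ne fun h => hf ?_, hF.2.2.lt_of_ne fun h => hf ?_⟩
  · obtain rfl := hAR.eq_initial hF h
    exact hF.2.1
  · obtain rfl := hAR.eq_terminal hF h
    exact hF.1.1

theorem reedyFactorisationUnique_of_basic (hAR : AlmostReedy deg) (hf : Basic deg f) :
    ReedyFactorisationUnique deg f := by
  have hcases : ∀ F : Factorisation f, IsReedyFactorisation deg F →
      F = .initial ∨ F = .terminal := fun F hF => by
    by_cases hx : deg F.mid = deg x
    · exact .inl (hAR.eq_initial hF hx)
    by_cases hy : deg F.mid = deg y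
    · exact .inr (hAR.eq_terminal hF hy)
    exact absurd (not_basic_iff_exists_factorisation.2 ⟨F, hF.1.2.lt_of_ne hx, hF.2.2.lt_of_ne hy⟩)
      (not_not.2 hf)
  have hend : IsReedyFactorisation deg (.initial : Factorisation f) →
      IsReedyFactorisation deg (.terminal : Factorisation f) →
      (.initial : Factorisation f) = .terminal := fun hi ht =>
    initial_eq_terminal_of_heq_id (hAR.2.1 f (hi.2.2.antisymm ht.1.2) hf)
  intro F F' hF hF'
  rcases hcases F hF with rfl | rfl <;> rcases hcases F' hF' with rfl | rfl
  exacts [rfl, hend hF hF', (hend hF' hF).symm, rfl]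

end AlmostReedy

namespace IsClosedAlmostReedy

variable {x y : C} {f : x ⟶ y}

theorem isReedyFactorisation_refinement (hC : IsClosedAlmostReedy deg) {G : Factorisation f}
    {A : Factorisation G.ι} {B : Factorisation G.π} {M : Factorisation (A.π ≫ B.ι)}
    (hA : IsReedyFactorisation deg A) (hB : IsReedyFactorisation deg B)
    (hM : IsReedyFactorisation deg M) : IsReedyFactorisation deg (refinement A B M) :=
  ⟨hC.lowering_comp _ _ hA.1 hM.1, hC.raising_comp _ _ hM.2 hB.2⟩

theorem exists_reedyFactorisation (hC : IsClosedAlmostReedy deg) (f : x ⟶ y) :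
    ∃ F : Factorisation f, IsReedyFactorisation deg F := by
  refine induction_on_min_deg (deg := deg)
    (motive := fun _ _ f => ∃ F : Factorisation f, IsReedyFactorisation deg F)
    (fun x y f IH => ?_) f
  by_cases hf : Basic deg f
  · rcases le_total (deg x) (deg y) with h | h
    · exact ⟨.initial, hC.almostReedy.lowering_id _, hf, h⟩
    · exact ⟨.terminal, ⟨hf, h⟩, hC.almostReedy.raising_id _⟩
  obtain ⟨G, hGx, hGy⟩ := not_basic_iff_exists_factorisation.1 hf
  have hG : deg G.mid < min (deg x) (deg y) := lt_min hGx hGy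
  obtain ⟨A, hA⟩ := IH G.ι ((min_le_right _ _).trans_lt hG)
  obtain ⟨B, hB⟩ := IH G.π ((min_le_left _ _).trans_lt hG)
  obtain ⟨M, hM⟩ := IH (A.π ≫ B.ι) ((min_le_left _ _).trans_lt (hA.2.2.trans_lt hG))
  exact ⟨_, hC.isReedyFactorisation_refinement hA hB hM⟩

theorem exists_isReedyRefinement (hC : IsClosedAlmostReedy deg) (G : Factorisation f) :
    ∃ E, IsReedyRefinement deg G E := by
  obtain ⟨A, hA⟩ := hC.exists_reedyFactorisation G.ι
  obtain ⟨B, hB⟩ := hC.exists_reedyFactorisation G.π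
  obtain ⟨M, hM⟩ := hC.exists_reedyFactorisation (A.π ≫ B.ι)
  exact ⟨_, A, B, M, hA, hB, hM, rfl⟩

theorem eq_of_isReedyRefinement_of_hom (hC : IsClosedAlmostReedy deg) {o : Ordinal.{w}}
    (IH : ∀ ⦃a b : C⦄ (u : a ⟶ b), min (deg a) (deg b) < o → ReedyFactorisationUnique deg u)
    {G G' : Factorisation f} (hG : deg G.mid < o) (hG' : deg G'.mid < o) (k : G ⟶ G')
    {E E' : Factorisation f} (hE : IsReedyRefinement deg G E)
    (hE' : IsReedyRefinement deg G' E') : E = E' := by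
  obtain ⟨A, B, ⟨m, mι, mπ, hm⟩, hA, hB, hM, rfl⟩ := hE
  obtain ⟨A', B', ⟨m', mι', mπ', hm'⟩, hA', hB', hM', rfl⟩ := hE'
  -- Factoring `A.π ≫ k.h` and `k.h ≫ B'.ι` identifies `A'` and `B`; the middle factorisations
  -- then both factor `A.π ≫ k.h ≫ B'.ι`.
  obtain ⟨S, hS⟩ := hC.exists_reedyFactorisation (A.π ≫ k.h)
  obtain ⟨T, hT⟩ := hC.exists_reedyFactorisation (k.h ≫ B'.ι)
  obtain rfl : A' = ⟨S.mid, A.ι ≫ S.ι, S.π, by simp⟩ :=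
    IH G'.ι ((min_le_right _ _).trans_lt hG') _ _ hA' ⟨hC.lowering_comp _ _ hA.1 hS.1, hS.2⟩
  obtain rfl : B = ⟨T.mid, T.ι, T.π ≫ B'.π, by simp⟩ :=
    IH G.π ((min_le_left _ _).trans_lt hG) _ _ hB ⟨hT.1, hC.raising_comp _ _ hT.2 hB'.2⟩
  have hmiddle : (⟨m, mι, mπ ≫ T.π, by simp [reassoc_of% hm]⟩ :
      Factorisation (A.π ≫ k.h ≫ B'.ι)) = ⟨m', S.ι ≫ mι', mπ', by simp [hm']⟩ :=
    IH _ ((min_le_left _ _).trans_lt (hA.2.2.trans_lt hG)) _ _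
      ⟨hM.1, hC.raising_comp _ _ hM.2 hT.2⟩ ⟨hC.lowering_comp _ _ hS.1 hM'.1, hM'.2⟩
  simp only [Factorisation.mk.injEq] at hmiddle
  obtain ⟨rfl, hι, hπ⟩ := hmiddle
  obtain rfl := eq_of_heq hι
  obtain rfl := eq_of_heq hπ
  simp only [refinement, assoc]

theorem reedyFactorisationUnique_of_not_basic (hC : IsClosedAlmostReedy deg)
    (hf : ¬ Basic deg f)
    (IH : ∀ ⦃a b : C⦄ (u : a ⟶ b), min (deg a) (deg b) < min (deg x) (deg y) →
      ReedyFactorisationUnique deg u) :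
    ReedyFactorisationUnique deg f := by
  intro F F' hF hF'
  have hmid : ∀ G : FdFact deg f, deg G.z < min (deg x) (deg y) :=
    fun G => lt_min G.lt_src G.lt_tgt
  have hstep : ∀ G G' : FdFact deg f, FdConn deg G G' ∨ FdConn deg G' G →
      IsReedyRefinement deg G.toFactorisation F →
        IsReedyRefinement deg G'.toFactorisation F := by
    rintro G G' (⟨k, hk⟩ | ⟨k, hk⟩) hGF <;>
      obtain ⟨E, hE⟩ := hC.exists_isReedyRefinement G'.toFactorisation
    · rwa [hC.eq_of_isReedyRefinement_of_hom IH (hmid G) (hmid G') ⟨k, hk.1, hk.2⟩ hGF hE]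
    · rwa [← hC.eq_of_isReedyRefinement_of_hom IH (hmid G') (hmid G) ⟨k, hk.1, hk.2⟩ hE hGF]
  obtain ⟨hFx, hFy⟩ := hC.almostReedy.deg_mid_lt_of_not_basic hf hF
  obtain ⟨hF'x, hF'y⟩ := hC.almostReedy.deg_mid_lt_of_not_basic hf hF'
  have hpropagate : ∀ G : FdFact deg f, FdZigzag deg (.ofFactorisation F hFx hFy) G →
      IsReedyRefinement deg G.toFactorisation F := fun G hG => by
    induction hG with
    | refl => exact hC.almostReedy.isReedyRefinement_self hF
    | tail _ hconn ih => exact hstep _ _ hconn ih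
  have hF'F := hpropagate _ (hC.almostReedy.2.2 f _ (.ofFactorisation F' hF'x hF'y))
  exact hC.eq_of_isReedyRefinement_of_hom IH (lt_min hF'x hF'y) (lt_min hF'x hF'y) (𝟙 F') hF'F
    (hC.almostReedy.isReedyRefinement_self hF')

theorem reedyFactorisationUnique (hC : IsClosedAlmostReedy deg) (f : x ⟶ y) :
    ReedyFactorisationUnique deg f := by
  refine induction_on_min_deg (deg := deg)
    (motive := fun _ _ f => ReedyFactorisationUnique deg f) (fun _ _ f IH => ?_) f
  by_cases hf : Basic deg f
  exacts [hC.almostReedy.reedyFactorisationUnique_of_basic hf,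
    hC.reedyFactorisationUnique_of_not_basic hf IH]

theorem isReedyWith (hC : IsClosedAlmostReedy deg) :
    IsReedyWith deg (fun _ _ f => Raising deg f) (fun _ _ f => Lowering deg f) := by
  refine ⟨hC.almostReedy.raising_id, hC.almostReedy.lowering_id, hC.raising_comp,
    hC.lowering_comp, fun x y f hf => ?_, fun x y f hf => ?_, fun x y f => ?_⟩
  · exact hf.2.lt_or_eq.imp_right fun h => hC.almostReedy.2.1 f h hf.1
  · exact hf.2.lt_or_eq.imp_right fun h => hC.almostReedy.2.1 f h.symm hf.1
  obtain ⟨F, hF⟩ := hC.exists_reedyFactorisation f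
  refine ⟨F.mid, F.ι, F.π, hF.1, hF.2, F.ι_π, fun z g h hg hh fac => ?_⟩
  obtain rfl := hC.reedyFactorisationUnique f F ⟨z, g, h, fac⟩ hF ⟨hg, hh⟩
  exact ⟨rfl, .rfl, .rfl⟩

end IsClosedAlmostReedy

theorem IsReedyWith.isClosedAlmostReedy {P Mi : MorphismProperty C}
    (hR : IsReedyWith deg P Mi) : IsClosedAlmostReedy deg where
  almostReedy := hR.almostReedy
  raising_comp _ _ _ _ _ hf hg :=
    hR.raising_iff.2 (hR.P_comp (hR.raising_iff.1 hf) (hR.raising_iff.1 hg))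
  lowering_comp _ _ _ _ _ hf hg :=
    hR.lowering_iff.2 (hR.Mi_comp (hR.lowering_iff.1 hf) (hR.lowering_iff.1 hg))

/-- A category with an ordinal degree function is a Reedy category (for some
choice of raising and lowering subcategories) if and only if it is almost-Reedy
and the classes of basic non-strictly degree-raising and basic non-strictly
degree-lowering morphisms are closed under composition. -/
theorem isReedy_iff_almostReedy_and_closed (deg : C → Ordinal.{w}) :
    (∃ P Mi : MorphismProperty C, IsReedyWith deg P Mi) ↔
      (AlmostReedy deg ∧
        (∀ ⦃x y z : C⦄ (f : x ⟶ y) (g : y ⟶ z),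
          Raising deg f → Raising deg g → Raising deg (f ≫ g)) ∧
        (∀ ⦃x y z : C⦄ (f : x ⟶ y) (g : y ⟶ z),
          Lowering deg f → Lowering deg g → Lowering deg (f ≫ g))) := by
  constructor
  · rintro ⟨P, Mi, hR⟩
    obtain ⟨hAR, hRc, hLc⟩ := hR.isClosedAlmostReedy
    exact ⟨hAR, hRc, hLc⟩
  · rintro ⟨hAR, hRc, hLc⟩
    exact ⟨_, _, IsClosedAlmostReedy.isReedyWith ⟨hAR, hRc, hLc⟩⟩
end

section
/- In every Reedy category, the subcategories C⃗ and C⃖ are determined by the degree function: C⃗ ∪ C⃖ is precisely the class of morphisms admitting no factorization through an object of strictly smaller degree than both endpoints, C⃗ consists of such morphisms that non-strictly raise degree, and C⃖ of such morphisms that non-strictly lower degree. -/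
open CategoryTheory Category

universe w v u

variable {C : Type u} [Category.{v} C]

/-- In a Reedy category the subcategories `C⃗` and `C⃖` are determined by the
degree function: `C⃗ ∪ C⃖` is exactly the class of basic morphisms, `C⃗`
consists of the basic morphisms that non-strictly raise degree, and `C⃖` of the
basic morphisms that non-strictly lower degree. -/
theorem reedy_subcategories_determined (deg : C → Ordinal.{w})
    (P Mi : MorphismProperty C) (hR : IsReedyWith deg P Mi) :
    ∀ ⦃x y : C⦄ (f : x ⟶ y),
      (P f ↔ Basic deg f ∧ deg x ≤ deg y) ∧
      (Mi f ↔ Basic deg f ∧ deg y ≤ deg x) ∧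
      ((P f ∨ Mi f) ↔ Basic deg f) := by
  obtain ⟨hP1, hM1, hPc, hMc, hPd, hMd, hfac⟩ := hR
  -- degree bounds
  have ple : ∀ ⦃x y : C⦄ (f : x ⟶ y), P f → deg x ≤ deg y := by
    intro x y f hf
    rcases hPd f hf with h | ⟨rfl, _⟩
    · exact h.le
    · exact le_refl _
  have mle : ∀ ⦃x y : C⦄ (f : x ⟶ y), Mi f → deg y ≤ deg x := by
    intro x y f hf
    rcases hMd f hf with h | ⟨rfl, _⟩
    · exact h.le
    · exact le_refl _
  -- P morphisms are basic
  have keyP : ∀ ⦃x y : C⦄ (f : x ⟶ y), P f → Basic deg f := by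
    intro x y f hf
    constructor
    rintro ⟨z, g, h, fac, lt1, lt2⟩
    obtain ⟨w, m, p, hm, hp, hfac1, -⟩ := hfac g
    obtain ⟨v, m', p', hm', hp', hfac2, -⟩ := hfac (p ≫ h)
    have hvx : deg v < deg x :=
      lt_of_le_of_lt (le_trans (mle m' hm') (ple p hp)) lt1
    obtain ⟨z₀, g₀, h₀, -, -, -, uniq⟩ := hfac f
    have e1 := (uniq x (𝟙 x) f (hM1 x) hf (by simp)).1
    have e2 := (uniq v (m ≫ m') p' (hMc m m' hm hm') hp'
      (by rw [Category.assoc, hfac2, ← Category.assoc, hfac1, fac])).1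
    rw [← e1, e2] at hvx
    exact absurd hvx (lt_irrefl _)
  -- Mi morphisms are basic
  have keyM : ∀ ⦃x y : C⦄ (f : x ⟶ y), Mi f → Basic deg f := by
    intro x y f hf
    constructor
    rintro ⟨z, g, h, fac, lt1, lt2⟩
    obtain ⟨w, m, p, hm, hp, hfac1, -⟩ := hfac h
    obtain ⟨v, m', p', hm', hp', hfac2, -⟩ := hfac (g ≫ m)
    have hvy : deg v < deg y :=
      lt_of_le_of_lt (le_trans (ple p' hp') (mle m hm)) lt2
    obtain ⟨z₀, g₀, h₀, -, -, -, uniq⟩ := hfac f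
    have e1 := (uniq y f (𝟙 y) hf (hP1 y) (by simp)).1
    have e2 := (uniq v m' (p' ≫ p) hm' (hPc p' p hp' hp)
      (by rw [← Category.assoc, hfac2, Category.assoc, hfac1, fac])).1
    rw [← e1, e2] at hvy
    exact absurd hvy (lt_irrefl _)
  -- converses
  have convP : ∀ ⦃x y : C⦄ (f : x ⟶ y), Basic deg f → deg x ≤ deg y → P f := by
    intro x y f hb hle
    obtain ⟨z, g, h, hm, hp, hfc, -⟩ := hfac f
    rcases hMd g hm with hlt | ⟨rfl, hg⟩
    · exact (hb.false ⟨z, g, h, hfc, hlt, lt_of_lt_of_le hlt hle⟩).elim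
    · rw [eq_of_heq hg, Category.id_comp] at hfc
      rwa [hfc] at hp
  have convM : ∀ ⦃x y : C⦄ (f : x ⟶ y), Basic deg f → deg y ≤ deg x → Mi f := by
    intro x y f hb hle
    obtain ⟨z, g, h, hm, hp, hfc, -⟩ := hfac f
    rcases hPd h hp with hlt | ⟨rfl, hh⟩
    · exact (hb.false ⟨z, g, h, hfc, lt_of_lt_of_le hlt hle, hlt⟩).elim
    · rw [eq_of_heq hh, Category.comp_id] at hfc
      rwa [hfc] at hm
  intro x y f
  refine ⟨⟨fun hf => ⟨keyP f hf, ple f hf⟩, fun ⟨hb, hle⟩ => convP f hb hle⟩,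
    ⟨fun hf => ⟨keyM f hf, mle f hf⟩, fun ⟨hb, hle⟩ => convM f hb hle⟩, ?_⟩
  constructor
  · rintro (hf | hf)
    · exact keyP f hf
    · exact keyM f hf
  · intro hb
    rcases le_total (deg x) (deg y) with hle | hle
    · exact Or.inl (convP f hb hle)
    · exact Or.inr (convM f hb hle)
end

section
/- In a Reedy category, any factorization f = h ∘ g of a morphism f is connected to the canonical Reedy factorization f = f⃗ ∘ f⃖ by a two-step zigzag of factorizations: the factorization (h⃗ ∘ k⃗, k⃖ ∘ g⃖) where k = h⃖ ∘ g⃗ equals (f⃗, f⃖), and there are connecting morphisms from (h, g) via h⃖ and from (f⃗, f⃖) via k⃗ to the middle factorization (h⃗, h⃖ ∘ g). In particular, if f = h ∘ g is a fundamental factorization then f = f⃗ ∘ f⃖ is fundamental and the zigzag consists of fundamental factorizations. -/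
open CategoryTheory Category

universe w v u

variable {C : Type u} [Category.{v} C]

/-- In a Reedy category, any factorization `f = h ∘ g` is connected to the
canonical Reedy factorization `f = f⃗ ∘ f⃖` by a two-step zigzag of
factorizations: with `k = h⃖ ∘ g⃗`, the factorization `(h⃗ ∘ k⃗, k⃖ ∘ g⃖)` is
the Reedy factorization of `f`, and there are connecting morphisms from `(h,g)`
via `h⃖`, and from `(f⃗, f⃖)` via `k⃗`, to the middle factorization
`(h⃗, h⃖ ∘ g)`.  Moreover, if `(h,g)` is fundamental then all three
factorizations in the zigzag are fundamental. -/
theorem reedy_factorization_zigzag (deg : C → Ordinal.{w})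
    (P Mi : MorphismProperty C) (hR : IsReedyWith deg P Mi)
    {x y z : C} (f : x ⟶ y) (g : x ⟶ z) (h : z ⟶ y) (hf : g ≫ h = f)
    -- the Reedy factorization `g = g⃗ ∘ g⃖` of `g`
    {u : C} (gm : x ⟶ u) (gp : u ⟶ z)
    (hgm : Mi gm) (hgp : P gp) (hgfac : gm ≫ gp = g)
    -- the Reedy factorization `h = h⃗ ∘ h⃖` of `h`
    {w' : C} (hm : z ⟶ w') (hp : w' ⟶ y)
    (hhm : Mi hm) (hhp : P hp) (hhfac : hm ≫ hp = h)
    -- the Reedy factorization `k = k⃗ ∘ k⃖` of `k = h⃖ ∘ g⃗`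
    {v : C} (km : u ⟶ v) (kp : v ⟶ w')
    (hkm : Mi km) (hkp : P kp) (hkfac : km ≫ kp = gp ≫ hm) :
    -- `(h⃗ ∘ k⃗, k⃖ ∘ g⃖)` is the Reedy factorization `(f⃗, f⃖)` of `f`:
    Mi (gm ≫ km) ∧ P (kp ≫ hp) ∧ (gm ≫ km) ≫ kp ≫ hp = f ∧
    -- `k⃗` is a connecting morphism from `(f⃗, f⃖)` to the middle
    -- factorization `(h⃗, h⃖ ∘ g)` (and `h⃖` connects `(h, g)` to it):
    (gm ≫ km) ≫ kp = g ≫ hm ∧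
    -- fundamentality is preserved:
    (deg z < deg x → deg z < deg y →
      deg v < deg x ∧ deg v < deg y ∧ deg w' < deg x ∧ deg w' < deg y) := by
  obtain ⟨hP1, hM1, hPc, hMc, hPdeg, hMdeg, _⟩ := hR
  have hMle : ∀ ⦃a b : C⦄ (m : a ⟶ b), Mi m → deg b ≤ deg a := by
    intro a b m hm
    rcases hMdeg m hm with h' | ⟨rfl, _⟩
    · exact h'.le
    · exact le_refl _
  refine ⟨hMc _ _ hgm hkm, hPc _ _ hkp hhp, ?_, ?_, ?_⟩
  · rw [assoc, ← assoc km, hkfac, assoc, hhfac, ← assoc, hgfac, hf]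
  · rw [assoc, hkfac, ← assoc, hgfac]
  · intro h1 h2
    have hwz : deg w' ≤ deg z := hMle hm hhm
    have hvw : deg v ≤ deg w' := by
      rcases hPdeg kp hkp with h' | ⟨rfl, _⟩
      · exact h'.le
      · exact le_refl _
    exact ⟨hvw.trans_lt (hwz.trans_lt h1), hvw.trans_lt (hwz.trans_lt h2),
      hwz.trans_lt h1, hwz.trans_lt h2⟩
end

section
/- Let C be a Reedy category and x an object. The inclusion of the category of nonidentity C⃖-morphisms out of x (with C⃖-triangles as morphisms) into the category of strictly degree-lowering morphisms out of x (with arbitrary commuting triangles) is an initial functor: for every f : x → y with deg(y) < deg(x), the comma category of C⃖-factorizations of f is connected. -/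
open CategoryTheory Category

universe w v u

variable {C : Type u} [Category.{v} C]

/-- An object of the comma category `ι/f`, where `ι : x//C⃖ → x//C` is the
inclusion: a nonidentity `C⃖`-morphism `g : x ⟶ z` together with a morphism
`k : z ⟶ y` with `k ∘ g = f`. -/
structure MinusFactObj (deg : C → Ordinal.{w}) (Mi : MorphismProperty C)
    {x y : C} (f : x ⟶ y) where
  z : C
  g : x ⟶ z
  k : z ⟶ y
  mem : Mi g
  nonid : ¬ (z = x ∧ HEq g (𝟙 x))
  fac : g ≫ k = f

/-- A morphism in the comma category `ι/f`: a `C⃖`-morphism `ℓ` between the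
intermediate objects making both triangles commute. -/
def MFConn {deg : C → Ordinal.{w}} {Mi : MorphismProperty C} {x y : C}
    {f : x ⟶ y} (a b : MinusFactObj deg Mi f) : Prop :=
  ∃ ℓ : a.z ⟶ b.z, Mi ℓ ∧ a.g ≫ ℓ = b.g ∧ ℓ ≫ b.k = a.k

/-- In a Reedy category, the inclusion `x//C⃖ → x//C` is an initial functor:
for every strictly degree-lowering morphism `f : x ⟶ y`, the comma category of
`C⃖`-factorizations of `f` is connected (nonempty, and any two objects are
joined by a zigzag). -/
theorem reedy_minus_inclusion_initial (deg : C → Ordinal.{w})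
    (P Mi : MorphismProperty C) (hR : IsReedyWith deg P Mi)
    {x y : C} (f : x ⟶ y) (hlt : deg y < deg x) :
    Nonempty (MinusFactObj deg Mi f) ∧
      ∀ a b : MinusFactObj deg Mi f,
        Relation.ReflTransGen (fun a b => MFConn a b ∨ MFConn b a) a b := by
  obtain ⟨hP1, hMi1, hPc, hMic, hPdeg, hMideg, hfac⟩ := hR
  -- canonical factorization of f
  obtain ⟨z0, g0, h0, hg0, hh0, hfac0, huniq⟩ := hfac f
  -- g0 is not an identity
  have hg0ni : ¬ (z0 = x ∧ HEq g0 (𝟙 x)) := by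
    rintro ⟨h1, hg⟩
    subst h1
    have hg' := eq_of_heq hg
    subst hg'
    rw [id_comp] at hfac0
    subst hfac0
    rcases hPdeg h0 hh0 with h | ⟨rfl, _⟩
    · exact absurd h (not_lt_of_gt hlt)
    · exact lt_irrefl _ hlt
  set o0 : MinusFactObj deg Mi f := ⟨z0, g0, h0, hg0, hg0ni, hfac0⟩ with ho0
  refine ⟨⟨o0⟩, ?_⟩
  -- degree of intermediate object is strictly below deg x
  have hdegz : ∀ a : MinusFactObj deg Mi f, deg a.z < deg x := by
    intro a
    rcases hMideg a.g a.mem with h | ⟨h1, h2⟩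
    · exact h
    · exact absurd ⟨h1.symm, h2⟩ a.nonid
  -- every object connects to the canonical one
  have key : ∀ a : MinusFactObj deg Mi f, MFConn a o0 := by
    intro a
    obtain ⟨w, m, p, hm, hp, hmp, _⟩ := hfac a.k
    have hgm : Mi (a.g ≫ m) := hMic a.g m a.mem hm
    have hdw : deg w < deg x := by
      rcases hMideg m hm with h | ⟨rfl, _⟩
      · exact h.trans (hdegz a)
      · exact hdegz a
    have hni : ¬ (w = x ∧ HEq (a.g ≫ m) (𝟙 x)) := by
      rintro ⟨rfl, _⟩
      exact lt_irrefl _ hdw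
    have hfacw : (a.g ≫ m) ≫ p = f := by rw [assoc, hmp, a.fac]
    obtain ⟨hz, hg, hk⟩ := huniq w (a.g ≫ m) p hgm hp hfacw
    subst hz
    refine ⟨m, hm, eq_of_heq hg.symm, ?_⟩
    have : h0 = p := eq_of_heq hk
    show m ≫ h0 = a.k
    rw [this, hmp]
  intro a b
  have s1 : Relation.ReflTransGen (fun a b => MFConn a b ∨ MFConn b a) a o0 :=
    Relation.ReflTransGen.single (Or.inl (key a))
  have s2 : Relation.ReflTransGen (fun a b => MFConn a b ∨ MFConn b a) o0 b :=
    Relation.ReflTransGen.single (Or.inr (key b))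
  exact s1.trans s2
end

section
/- In an almost c-Reedy category: (i) if f ∈ C⃖ (basic, degree non-strictly-lowering) and g is basic level, then g ∘ f ∈ C⃖; (ii) if g ∘ f ∈ C⃖ and one of f, g is basic level, then the other is in C⃖; (iii) if g ∘ f ∈ C⃗ and one of f, g is basic level, then the other is in C⃗. -/
open CategoryTheory Category

universe w v u

variable {C : Type u} [Category.{v} C]

/-- A basic level morphism: basic, with domain and codomain of equal degree. -/
def BasicLevel (deg : C → Ordinal.{w}) {x y : C} (f : x ⟶ y) : Prop :=
  Basic deg f ∧ deg x = deg y

/-- `C` (with the degree function `deg`) is almost c-Reedy: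
(1) all identities are basic;
(2) basic level morphisms are closed under composition;
(3) the category of fundamental factorizations of any (non-basic) morphism is
    connected;
(4) the composite of a basic strictly-degree-decreasing morphism followed by a
    basic level morphism is basic;
(5) for each `x` and each degree `δ < deg x`, the functor of basic morphisms
    from `x` on the `δ`-th stratum is a coproduct of retracts of representables,
    phrased elementarily: any cospan of basic level morphisms under basic
    strictly-decreasing morphisms out of `x` admits a compatible cone. -/
def AlmostCReedy (deg : C → Ordinal.{w}) : Prop :=
  (∀ x : C, Basic deg (𝟙 x)) ∧
  (∀ ⦃x y z : C⦄ (f : x ⟶ y) (g : y ⟶ z), deg x = deg y → deg y = deg z →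
    Basic deg f → Basic deg g → Basic deg (f ≫ g)) ∧
  (∀ ⦃x y : C⦄ (f : x ⟶ y) (F F' : FdFact deg f), FdZigzag deg F F') ∧
  (∀ ⦃x y z : C⦄ (f : x ⟶ y) (g : y ⟶ z), Basic deg f → deg y < deg x →
    Basic deg g → deg y = deg z → Basic deg (f ≫ g)) ∧
  (∀ ⦃x y₁ y₂ y₃ : C⦄ (f₁ : x ⟶ y₁) (f₂ : x ⟶ y₂) (f₃ : x ⟶ y₃)
      (g₁ : y₁ ⟶ y₂) (g₃ : y₃ ⟶ y₂),
    deg y₁ < deg x → deg y₁ = deg y₂ → deg y₂ = deg y₃ →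
    Basic deg f₁ → Basic deg f₂ → Basic deg f₃ → Basic deg g₁ → Basic deg g₃ →
    f₁ ≫ g₁ = f₂ → f₃ ≫ g₃ = f₂ →
    ∃ (y₀ : C) (f₀ : x ⟶ y₀) (h₁ : y₀ ⟶ y₁) (h₃ : y₀ ⟶ y₃),
      deg y₀ = deg y₁ ∧ Basic deg f₀ ∧ Basic deg h₁ ∧ Basic deg h₃ ∧
      f₀ ≫ h₁ = f₁ ∧ f₀ ≫ h₃ = f₃ ∧ h₁ ≫ g₁ = h₃ ≫ g₃)

/-- In an almost c-Reedy category: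
(i) the composite of a `C⃖`-morphism with a basic level morphism lies in `C⃖`;
(ii) if a composite lies in `C⃖` and one factor is basic level, the other factor
lies in `C⃖`; (iii) dually for `C⃗`. -/
theorem almostCReedy_compose (deg : C → Ordinal.{w}) (hC : AlmostCReedy deg) :
    (∀ ⦃x y z : C⦄ (f : x ⟶ y) (g : y ⟶ z),
      Lowering deg f → BasicLevel deg g → Lowering deg (f ≫ g)) ∧
    (∀ ⦃x y z : C⦄ (f : x ⟶ y) (g : y ⟶ z), Lowering deg (f ≫ g) →
      (BasicLevel deg g → Lowering deg f) ∧ (BasicLevel deg f → Lowering deg g)) ∧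
    (∀ ⦃x y z : C⦄ (f : x ⟶ y) (g : y ⟶ z), Raising deg (f ≫ g) →
      (BasicLevel deg g → Raising deg f) ∧ (BasicLevel deg f → Raising deg g)) := by

  obtain ⟨hid, hlvl, hconn, hdec, hcone⟩ := hC
  refine ⟨?_, ?_, ?_⟩
  · intro x y z f g hf hg
    refine ⟨?_, hg.2 ▸ hf.2⟩
    rcases lt_or_eq_of_le hf.2 with h | h
    · exact hdec f g hf.1 h hg.1 hg.2
    · exact hlvl f g h.symm hg.2 hf.1 hg.1
  · intro x y z f g hfg
    constructor
    · intro hg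
      refine ⟨?_, hg.2 ▸ (hg.2 ▸ hfg.2 : deg z ≤ deg x)⟩
      constructor
      intro F
      exact hfg.1.false ⟨F.z, F.g, F.h ≫ g, by rw [← assoc, F.fac], F.lt_src,
        hg.2 ▸ F.lt_tgt⟩
    · intro hf
      refine ⟨?_, hf.2 ▸ hfg.2⟩
      constructor
      intro F
      exact hfg.1.false ⟨F.z, f ≫ F.g, F.h, by rw [assoc, F.fac], hf.2 ▸ F.lt_src,
        F.lt_tgt⟩
  · intro x y z f g hfg
    constructor
    · intro hg
      refine ⟨?_, hg.2 ▸ hfg.2⟩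
      constructor
      intro F
      exact hfg.1.false ⟨F.z, F.g, F.h ≫ g, by rw [← assoc, F.fac], F.lt_src,
        hg.2 ▸ F.lt_tgt⟩
    · intro hf
      refine ⟨?_, hf.2 ▸ hfg.2⟩
      constructor
      intro F
      exact hfg.1.false ⟨F.z, f ≫ F.g, F.h, by rw [assoc, F.fac], hf.2 ▸ F.lt_src,
        F.lt_tgt⟩
end

section
/- Every morphism in an almost c-Reedy category factors as f = h ∘ g with g ∈ C⃖ (basic, non-strictly degree-lowering) and h ∈ C⃗ (basic, non-strictly degree-raising). -/
open CategoryTheory Category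

universe w v u

variable {C : Type u} [Category.{v} C]

/-- Every morphism in an almost c-Reedy category factors as a basic non-strictly
degree-lowering morphism followed by a basic non-strictly degree-raising one. -/
theorem almostCReedy_factorization (deg : C → Ordinal.{w})
    (hC : AlmostCReedy deg) {x y : C} (f : x ⟶ y) :
    ∃ (z : C) (g : x ⟶ z) (k : z ⟶ y),
      g ≫ k = f ∧ Lowering deg g ∧ Raising deg k := by
  by_cases hb : Basic deg f
  · rcases le_total (deg x) (deg y) with h | h
    · exact ⟨x, 𝟙 x, f, id_comp f, ⟨hC.1 x, le_refl _⟩, hb, h⟩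
    · exact ⟨y, f, 𝟙 y, comp_id f, ⟨hb, h⟩, hC.1 y, le_refl _⟩
  · have hne : Nonempty (FdFact deg f) := not_isEmpty_iff.mp hb
    have hwf : WellFounded (fun F F' : FdFact deg f => deg F.z < deg F'.z) :=
      InvImage.wf (fun F : FdFact deg f => deg F.z) Ordinal.lt_wf
    obtain ⟨F, -, hmin⟩ := hwf.has_min Set.univ ⟨hne.some, trivial⟩
    have hg : Basic deg F.g := by
      rw [Basic, isEmpty_iff]
      intro G
      exact hmin ⟨G.z, G.g, G.h ≫ F.h, by rw [← assoc, G.fac, F.fac],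
        G.lt_src, G.lt_tgt.trans F.lt_tgt⟩ trivial G.lt_tgt
    have hh : Basic deg F.h := by
      rw [Basic, isEmpty_iff]
      intro G
      exact hmin ⟨G.z, F.g ≫ G.g, G.h, by rw [assoc, G.fac, F.fac],
        G.lt_src.trans F.lt_src, G.lt_tgt⟩ trivial G.lt_src
    exact ⟨F.z, F.g, F.h, F.fac, ⟨hg, F.lt_src.le⟩, hh, F.lt_tgt.le⟩
end

section
/- Every fs-Reedy category C (Reedy category with functorial but not necessarily unique factorizations) contains a full subcategory D such that the inclusion D ↪ C is an equivalence of categories and D, with the restricted degree function, is a genuine Reedy category whose raising and lowering subcategories are contained in those of C. In particular, every object x of C with non-basic identity is isomorphic to an object y of strictly smaller degree, via isomorphisms x → y in C⃖ and y → x in C⃗. -/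
open CategoryTheory Category

universe w v u

variable {C : Type u} [Category.{v} C]

/-- A functorial (but not necessarily unique) factorization of every morphism as
a `Mi`-morphism followed by a `P`-morphism: every commuting square between `f`
and `f'` induces a compatible morphism between the middle objects,
functorially. -/
structure FunctorialFact (P Mi : MorphismProperty C) where
  mid : ∀ {x y : C}, (x ⟶ y) → C
  left : ∀ {x y : C} (f : x ⟶ y), x ⟶ mid f
  right : ∀ {x y : C} (f : x ⟶ y), mid f ⟶ y
  left_mem : ∀ {x y : C} (f : x ⟶ y), Mi (left f)
  right_mem : ∀ {x y : C} (f : x ⟶ y), P (right f)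
  fac : ∀ {x y : C} (f : x ⟶ y), left f ≫ right f = f
  map : ∀ {x y x' y' : C} (f : x ⟶ y) (f' : x' ⟶ y') (u : x ⟶ x') (v : y ⟶ y'),
    f ≫ v = u ≫ f' → (mid f ⟶ mid f')
  map_left : ∀ {x y x' y' : C} (f : x ⟶ y) (f' : x' ⟶ y') (u : x ⟶ x')
    (v : y ⟶ y') (hsq : f ≫ v = u ≫ f'),
    left f ≫ map f f' u v hsq = u ≫ left f'
  map_right : ∀ {x y x' y' : C} (f : x ⟶ y) (f' : x' ⟶ y') (u : x ⟶ x')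
    (v : y ⟶ y') (hsq : f ≫ v = u ≫ f'),
    map f f' u v hsq ≫ right f' = right f ≫ v
  map_id : ∀ {x y : C} (f : x ⟶ y) (hsq : f ≫ 𝟙 y = 𝟙 x ≫ f),
    map f f (𝟙 x) (𝟙 y) hsq = 𝟙 (mid f)
  map_comp : ∀ {x y x' y' x'' y'' : C} (f : x ⟶ y) (f' : x' ⟶ y')
    (f'' : x'' ⟶ y'') (u : x ⟶ x') (v : y ⟶ y') (u' : x' ⟶ x'') (v' : y' ⟶ y'')
    (hsq : f ≫ v = u ≫ f') (hsq' : f' ≫ v' = u' ≫ f'')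
    (hsq'' : f ≫ (v ≫ v') = (u ≫ u') ≫ f''),
    map f f'' (u ≫ u') (v ≫ v') hsq'' = map f f' u v hsq ≫ map f' f'' u' v' hsq'


/-!
Strictness of `P` and `Mi` forces the functorial factorization of a raising map to have identity
left part, and dually; so raising maps lie in `P`, lowering maps lie in `Mi`, and functoriality of
the factorization provides lifts in commutative squares from a lowering map to a raising map.
A factorization of `f` through an object of minimal degree has lowering and raising parts and a
middle object with basic identity. Conversely, the lifts show that every lowering–raising
factorization has minimal degree, and that two of them differ by a basic level morphism, which is
an identity. Hence the objects with basic identity form a Reedy category; any other object `x` is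
isomorphic, through a minimal factorization of `𝟙 x`, to an object of smaller degree, and by
induction on degree to one with basic identity.
-/

structure StrictFunctorialFact (deg : C → Ordinal.{w}) (P Mi : MorphismProperty C)
    extends FunctorialFact P Mi where
  P_strict : ∀ ⦃x y : C⦄ (f : x ⟶ y), P f → deg x < deg y ∨ (x = y ∧ HEq f (𝟙 x))
  Mi_strict : ∀ ⦃x y : C⦄ (f : x ⟶ y), Mi f → deg y < deg x ∨ (x = y ∧ HEq f (𝟙 x))

lemma eq_eqToHom_of_heq_id {x y : C} {f : x ⟶ y} (e : x = y) (hf : HEq f (𝟙 x)) :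
    f = eqToHom e := by
  subst e
  exact eq_of_heq hf

lemma ObjectProperty.FullSubcategory.heq_of_heq_hom {D : ObjectProperty C}
    {X X' Y Y' : D.FullSubcategory} (f : X ⟶ Y) (f' : X' ⟶ Y') (hX : X.obj = X'.obj)
    (hY : Y.obj = Y'.obj) (hf : HEq f.hom f'.hom) : HEq f f' := by
  obtain rfl : X = X' := ObjectProperty.FullSubcategory.ext hX
  obtain rfl : Y = Y' := ObjectProperty.FullSubcategory.ext hY
  exact heq_of_eq (InducedCategory.hom_ext (eq_of_heq hf))

def IsMinimalFactorization (deg : C → Ordinal.{w}) {x z y : C} (g : x ⟶ z) (h : z ⟶ y) : Prop :=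
  ∀ ⦃w : C⦄ (a : x ⟶ w) (b : w ⟶ y), a ≫ b = g ≫ h → deg z ≤ deg w

lemma exists_isMinimalFactorization (deg : C → Ordinal.{w}) {x y : C} (f : x ⟶ y) :
    ∃ (z : C) (g : x ⟶ z) (h : z ⟶ y), g ≫ h = f ∧ IsMinimalFactorization deg g h := by
  obtain ⟨⟨z, g, h⟩, hfac, hmin⟩ :=
    (InvImage.wf (fun F : Σ z : C, (x ⟶ z) × (z ⟶ y) => deg F.1) Ordinal.lt_wf).has_min
      {F | F.2.1 ≫ F.2.2 = f} ⟨⟨y, f, 𝟙 y⟩, comp_id f⟩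
  refine ⟨z, g, h, hfac, fun w a b hab => not_lt.mp ?_⟩
  exact hmin ⟨w, a, b⟩ (hab.trans hfac)

namespace IsMinimalFactorization

variable {deg : C → Ordinal.{w}} {x z y : C} {g : x ⟶ z} {h : z ⟶ y}

lemma deg_le_src (hgh : IsMinimalFactorization deg g h) : deg z ≤ deg x :=
  hgh (𝟙 x) (g ≫ h) (id_comp _)

lemma deg_le_tgt (hgh : IsMinimalFactorization deg g h) : deg z ≤ deg y :=
  hgh (g ≫ h) (𝟙 y) (comp_id _)

lemma basic_of_comp_eq_left (hgh : IsMinimalFactorization deg g h) {z' : C} {g' : x ⟶ z'}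
    (k : z' ⟶ z) (hk : g' ≫ k = g) : Basic deg k :=
  ⟨fun F => (hgh (g' ≫ F.g) (F.h ≫ h) (by rw [assoc, reassoc_of% F.fac, reassoc_of% hk])).not_gt
    F.lt_tgt⟩

lemma basic_of_comp_eq_right (hgh : IsMinimalFactorization deg g h) {z' : C} {h' : z' ⟶ y}
    (k : z ⟶ z') (hk : k ≫ h' = h) : Basic deg k :=
  ⟨fun F => (hgh (g ≫ F.g) (F.h ≫ h') (by rw [assoc, reassoc_of% F.fac, hk])).not_gt F.lt_src⟩

lemma basic_id (hgh : IsMinimalFactorization deg g h) : Basic deg (𝟙 z) :=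
  hgh.basic_of_comp_eq_left (𝟙 z) (comp_id g)

lemma lowering (hgh : IsMinimalFactorization deg g h) : Lowering deg g :=
  ⟨hgh.basic_of_comp_eq_left g (id_comp g), hgh.deg_le_src⟩

lemma raising (hgh : IsMinimalFactorization deg g h) : Raising deg h :=
  ⟨hgh.basic_of_comp_eq_right h (comp_id h), hgh.deg_le_tgt⟩

end IsMinimalFactorization

namespace StrictFunctorialFact

variable {deg : C → Ordinal.{w}} {P Mi : MorphismProperty C}

lemma left_eq_eqToHom (R : StrictFunctorialFact deg P Mi) {x y : C} {f : x ⟶ y}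
    (hf : Raising deg f) : ∃ e : x = R.mid f, R.left f = eqToHom e := by
  rcases R.Mi_strict (R.left f) (R.left_mem f) with hlt | ⟨e, hid⟩
  · exact (hf.1.false ⟨R.mid f, R.left f, R.right f, R.fac f, hlt, hlt.trans_le hf.2⟩).elim
  · exact ⟨e, eq_eqToHom_of_heq_id e hid⟩

lemma right_eq_eqToHom (R : StrictFunctorialFact deg P Mi) {x y : C} {f : x ⟶ y}
    (hf : Lowering deg f) : ∃ e : R.mid f = y, R.right f = eqToHom e := by
  rcases R.P_strict (R.right f) (R.right_mem f) with hlt | ⟨e, hid⟩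
  · exact (hf.1.false ⟨R.mid f, R.left f, R.right f, R.fac f, hlt.trans_le hf.2, hlt⟩).elim
  · exact ⟨e, eq_eqToHom_of_heq_id e hid⟩

lemma P_of_raising (R : StrictFunctorialFact deg P Mi) {x y : C} {f : x ⟶ y}
    (hf : Raising deg f) : P f := by
  obtain ⟨e, he⟩ := R.left_eq_eqToHom hf
  exact P.of_eq (R.right_mem f) e.symm rfl (by rw [eqToHom_refl, comp_id, ← he, R.fac])

lemma Mi_of_lowering (R : StrictFunctorialFact deg P Mi) {x y : C} {f : x ⟶ y}
    (hf : Lowering deg f) : Mi f := by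
  obtain ⟨e, he⟩ := R.right_eq_eqToHom hf
  exact Mi.of_eq (R.left_mem f) rfl e (by rw [eqToHom_refl, id_comp, ← he, R.fac])

lemma eq_id_of_basic_of_deg_eq (R : StrictFunctorialFact deg P Mi) {x y : C} {f : x ⟶ y}
    (hf : Basic deg f) (hxy : deg x = deg y) : x = y ∧ HEq f (𝟙 x) :=
  (R.P_strict f (R.P_of_raising ⟨hf, hxy.le⟩)).resolve_left hxy.not_lt

lemma exists_lift (R : StrictFunctorialFact deg P Mi) {a b c d : C} {i : a ⟶ b} {p : c ⟶ d}
    (hi : Lowering deg i) (hp : Raising deg p) {u : a ⟶ c} {v : b ⟶ d}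
    (sq : u ≫ p = i ≫ v) : ∃ k : b ⟶ c, i ≫ k = u ∧ k ≫ p = v := by
  obtain ⟨eb, hr⟩ := R.right_eq_eqToHom hi
  obtain ⟨ec, hl⟩ := R.left_eq_eqToHom hp
  have hi' : R.left i ≫ eqToHom eb = i := by rw [← hr, R.fac]
  have hp' : eqToHom ec ≫ R.right p = p := by rw [← hl, R.fac]
  refine ⟨eqToHom eb.symm ≫ R.map i p u v sq.symm ≫ eqToHom ec.symm, ?_, ?_⟩
  · calc i ≫ eqToHom eb.symm ≫ R.map i p u v sq.symm ≫ eqToHom ec.symm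
        _ = R.left i ≫ R.map i p u v sq.symm ≫ eqToHom ec.symm := by simp [← hi']
        _ = u ≫ R.left p ≫ eqToHom ec.symm := by rw [← assoc, R.map_left, assoc]
        _ = u := by simp [hl]
  · calc (eqToHom eb.symm ≫ R.map i p u v sq.symm ≫ eqToHom ec.symm) ≫ p
        _ = eqToHom eb.symm ≫ R.map i p u v sq.symm ≫ R.right p := by simp [← hp']
        _ = (eqToHom eb.symm ≫ R.right i) ≫ v := by rw [R.map_right, assoc]
        _ = v := by simp [hr]

lemma isMinimalFactorization (R : StrictFunctorialFact deg P Mi) {x z y : C} {g : x ⟶ z}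
    {h : z ⟶ y} (hg : Lowering deg g) (hh : Raising deg h) : IsMinimalFactorization deg g h := by
  intro w a b hab
  by_contra! hw
  obtain ⟨w₀, a₀, b₀, hfac₀, hmin₀⟩ := exists_isMinimalFactorization deg (g ≫ h)
  obtain ⟨k, hk, -⟩ := R.exists_lift hmin₀.lowering hh hfac₀.symm
  have hw₀ : deg w₀ < deg z := (hmin₀ a b (hab.trans hfac₀.symm)).trans_lt hw
  exact hg.1.false ⟨w₀, a₀, k, hk, hw₀.trans_le hg.2, hw₀⟩

lemma factorization_unique (R : StrictFunctorialFact deg P Mi) {x y z z' : C}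
    {g : x ⟶ z} {h : z ⟶ y} {g' : x ⟶ z'} {h' : z' ⟶ y}
    (hg : Lowering deg g) (hh : Raising deg h) (hg' : Lowering deg g') (hh' : Raising deg h')
    (hfac : g ≫ h = g' ≫ h') : z = z' ∧ HEq g g' ∧ HEq h h' := by
  have hmin := R.isMinimalFactorization hg hh
  have hdeg : deg z' = deg z :=
    le_antisymm (R.isMinimalFactorization hg' hh' g h hfac) (hmin g' h' hfac.symm)
  obtain ⟨k, hgk, hkh⟩ := R.exists_lift hg' hh hfac
  obtain ⟨rfl, hk⟩ := R.eq_id_of_basic_of_deg_eq (hmin.basic_of_comp_eq_left k hgk) hdeg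
  obtain rfl : k = 𝟙 _ := eq_of_heq hk
  simp only [comp_id, id_comp] at hgk hkh
  exact ⟨rfl, heq_of_eq hgk.symm, heq_of_eq hkh⟩

lemma raising_comp (R : StrictFunctorialFact deg P Mi) {x y z : C} {f : x ⟶ y} {g : y ⟶ z}
    (hf : Raising deg f) (hg : Raising deg g) : Raising deg (f ≫ g) := by
  refine ⟨⟨fun F => ?_⟩, hf.2.trans hg.2⟩
  obtain ⟨w₀, a₀, b₀, hfac₀, hmin₀⟩ := exists_isMinimalFactorization deg (f ≫ g)
  obtain ⟨k, hk, -⟩ := R.exists_lift hmin₀.lowering hg hfac₀.symm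
  have hw₀ : deg w₀ < deg x := (hmin₀ F.g F.h (F.fac.trans hfac₀.symm)).trans_lt F.lt_src
  exact hf.1.false ⟨w₀, a₀, k, hk, hw₀, hw₀.trans_le hf.2⟩

lemma lowering_comp (R : StrictFunctorialFact deg P Mi) {x y z : C} {f : x ⟶ y} {g : y ⟶ z}
    (hf : Lowering deg f) (hg : Lowering deg g) : Lowering deg (f ≫ g) := by
  refine ⟨⟨fun F => ?_⟩, hg.2.trans hf.2⟩
  obtain ⟨w₀, a₀, b₀, hfac₀, hmin₀⟩ := exists_isMinimalFactorization deg (f ≫ g)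
  obtain ⟨k, -, hk⟩ := R.exists_lift hf hmin₀.raising hfac₀
  have hw₀ : deg w₀ < deg z := (hmin₀ F.g F.h (F.fac.trans hfac₀.symm)).trans_lt F.lt_tgt
  exact hg.1.false ⟨w₀, k, b₀, hk, hw₀.trans_le hg.2, hw₀⟩

lemma exists_iso_of_not_basic_id (R : StrictFunctorialFact deg P Mi) {x : C}
    (hx : ¬ Basic deg (𝟙 x)) :
    ∃ (y : C) (g : x ⟶ y) (h : y ⟶ x), deg y < deg x ∧ Mi g ∧ P h ∧
      g ≫ h = 𝟙 x ∧ h ≫ g = 𝟙 y := by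
  obtain ⟨y, g, h, hfac, hmin⟩ := exists_isMinimalFactorization deg (𝟙 x)
  obtain ⟨F⟩ := not_isEmpty_iff.mp hx
  have hlt : deg y < deg x := (hmin F.g F.h (F.fac.trans hfac.symm)).trans_lt F.lt_src
  have hhg : Basic deg (h ≫ g) := hmin.basic_of_comp_eq_left (h ≫ g) (by rw [reassoc_of% hfac])
  exact ⟨y, g, h, hlt, R.Mi_of_lowering hmin.lowering, R.P_of_raising hmin.raising, hfac,
    eq_of_heq (R.eq_id_of_basic_of_deg_eq hhg rfl).2⟩

lemma exists_iso_basic_id (R : StrictFunctorialFact deg P Mi) (x : C) :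
    ∃ d : C, Basic deg (𝟙 d) ∧ Nonempty (x ≅ d) := by
  induction hδ : deg x using WellFoundedLT.induction generalizing x with
  | _ δ ih =>
    by_cases hx : Basic deg (𝟙 x)
    · exact ⟨x, hx, ⟨Iso.refl x⟩⟩
    obtain ⟨y, g, h, hlt, -, -, hgh, hhg⟩ := R.exists_iso_of_not_basic_id hx
    obtain ⟨d, hd, ⟨e⟩⟩ := ih (deg y) (hδ ▸ hlt) y rfl
    exact ⟨d, hd, ⟨⟨g, h, hgh, hhg⟩ ≪≫ e⟩⟩

lemma isEquivalence_ι_basic_id (R : StrictFunctorialFact deg P Mi) :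
    (ObjectProperty.ι fun x => Basic deg (𝟙 x)).IsEquivalence := by
  have : (ObjectProperty.ι fun x => Basic deg (𝟙 x)).EssSurj := ⟨fun x => by
    obtain ⟨d, hd, ⟨e⟩⟩ := R.exists_iso_basic_id x
    exact ⟨⟨d, hd⟩, ⟨e.symm⟩⟩⟩
  exact {}

lemma isReedyWith_raising_lowering (R : StrictFunctorialFact deg P Mi) :
    IsReedyWith (fun X : ObjectProperty.FullSubcategory (fun x => Basic deg (𝟙 x)) => deg X.obj)
      (fun _ _ f => Raising deg ((ObjectProperty.ι _).map f))
      (fun _ _ f => Lowering deg ((ObjectProperty.ι _).map f)) := by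
  have level : ∀ ⦃X Y : ObjectProperty.FullSubcategory (fun x => Basic deg (𝟙 x))⦄ (f : X ⟶ Y),
      Basic deg f.hom → deg X.obj = deg Y.obj → X = Y ∧ HEq f (𝟙 X) := fun X Y f hf hXY => by
    obtain ⟨hobj, hid⟩ := R.eq_id_of_basic_of_deg_eq hf hXY
    exact ⟨ObjectProperty.FullSubcategory.ext hobj,
      ObjectProperty.FullSubcategory.heq_of_heq_hom f (𝟙 X) rfl hobj.symm hid⟩
  refine ⟨fun X => ⟨X.property, le_rfl⟩, fun X => ⟨X.property, le_rfl⟩,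
    fun _ _ _ _ _ hf hg => R.raising_comp hf hg, fun _ _ _ _ _ hf hg => R.lowering_comp hf hg,
    fun _ _ f hf => hf.2.lt_or_eq.imp_right (level f hf.1),
    fun _ _ f hf => hf.2.lt_or_eq.imp_right fun h => level f hf.1 h.symm, fun _ _ f => ?_⟩
  obtain ⟨z, g, h, hfac, hmin⟩ := exists_isMinimalFactorization deg f.hom
  refine ⟨⟨z, hmin.basic_id⟩, ObjectProperty.homMk g, ObjectProperty.homMk h, hmin.lowering,
    hmin.raising, InducedCategory.hom_ext hfac, fun Z' g' h' hg' hh' hfac' => ?_⟩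
  obtain ⟨hz, hg, hh⟩ := R.factorization_unique hmin.lowering hmin.raising hg' hh'
    (hfac.trans (congrArg InducedCategory.Hom.hom hfac').symm)
  exact ⟨ObjectProperty.FullSubcategory.ext hz,
    ObjectProperty.FullSubcategory.heq_of_heq_hom _ _ rfl hz hg,
    ObjectProperty.FullSubcategory.heq_of_heq_hom _ _ hz rfl hh⟩

end StrictFunctorialFact

theorem fsReedy_has_reedy_full_subcategory_general (deg : C → Ordinal.{w})
    (P Mi : MorphismProperty C)
    (hPstrict : ∀ ⦃x y : C⦄ (f : x ⟶ y), P f →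
      deg x < deg y ∨ (x = y ∧ HEq f (𝟙 x)))
    (hMstrict : ∀ ⦃x y : C⦄ (f : x ⟶ y), Mi f →
      deg y < deg x ∨ (x = y ∧ HEq f (𝟙 x)))
    (FF : FunctorialFact P Mi) :
    (∃ D : C → Prop,
      (ObjectProperty.ι D).IsEquivalence ∧
      ∃ P' M' : MorphismProperty (ObjectProperty.FullSubcategory D),
        IsReedyWith (fun X => deg X.obj) P' M' ∧
        (∀ ⦃X Y : ObjectProperty.FullSubcategory D⦄ (f : X ⟶ Y),
          P' f → P ((ObjectProperty.ι D).map f)) ∧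
        (∀ ⦃X Y : ObjectProperty.FullSubcategory D⦄ (f : X ⟶ Y),
          M' f → Mi ((ObjectProperty.ι D).map f))) ∧
    (∀ x : C, ¬ Basic deg (𝟙 x) →
      ∃ (y : C) (g : x ⟶ y) (h : y ⟶ x), deg y < deg x ∧ Mi g ∧ P h ∧
        g ≫ h = 𝟙 x ∧ h ≫ g = 𝟙 y) := by
  let R : StrictFunctorialFact deg P Mi :=
    { FF with P_strict := hPstrict, Mi_strict := hMstrict }
  exact ⟨⟨fun x => Basic deg (𝟙 x), R.isEquivalence_ι_basic_id, _, _,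
      R.isReedyWith_raising_lowering, fun _ _ _ hf => R.P_of_raising hf,
      fun _ _ _ hf => R.Mi_of_lowering hf⟩,
    fun _ hx => R.exists_iso_of_not_basic_id hx⟩

/-- Every fs-Reedy category (Reedy category with functorial but not necessarily
unique factorizations) contains a full subcategory `D` such that the inclusion
`D ↪ C` is an equivalence of categories and `D`, with the restricted degree
function, is a genuine Reedy category whose raising and lowering subcategories
are contained in those of `C`.  In particular, every object `x` whose identity
is not basic is isomorphic to an object of strictly smaller degree via inverse
isomorphisms lying in `C⃖` and `C⃗` respectively. -/
theorem fsReedy_has_reedy_full_subcategory (deg : C → Ordinal.{w})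
    (P Mi : MorphismProperty C)
    (hPid : ∀ x : C, P (𝟙 x)) (hMid : ∀ x : C, Mi (𝟙 x))
    (hPcomp : ∀ ⦃x y z : C⦄ (f : x ⟶ y) (g : y ⟶ z), P f → P g → P (f ≫ g))
    (hMcomp : ∀ ⦃x y z : C⦄ (f : x ⟶ y) (g : y ⟶ z), Mi f → Mi g → Mi (f ≫ g))
    (hPstrict : ∀ ⦃x y : C⦄ (f : x ⟶ y), P f →
      deg x < deg y ∨ (x = y ∧ HEq f (𝟙 x)))
    (hMstrict : ∀ ⦃x y : C⦄ (f : x ⟶ y), Mi f →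
      deg y < deg x ∨ (x = y ∧ HEq f (𝟙 x)))
    (FF : FunctorialFact P Mi) :
    (∃ D : C → Prop,
      (ObjectProperty.ι D).IsEquivalence ∧
      ∃ P' M' : MorphismProperty (ObjectProperty.FullSubcategory D),
        IsReedyWith (fun X => deg X.obj) P' M' ∧
        (∀ ⦃X Y : ObjectProperty.FullSubcategory D⦄ (f : X ⟶ Y),
          P' f → P ((ObjectProperty.ι D).map f)) ∧
        (∀ ⦃X Y : ObjectProperty.FullSubcategory D⦄ (f : X ⟶ Y),
          M' f → Mi ((ObjectProperty.ι D).map f))) ∧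
    (∀ x : C, ¬ Basic deg (𝟙 x) →
      ∃ (y : C) (g : x ⟶ y) (h : y ⟶ x), deg y < deg x ∧ Mi g ∧ P h ∧
        g ≫ h = 𝟙 x ∧ h ≫ g = 𝟙 y) :=
  fsReedy_has_reedy_full_subcategory_general deg P Mi hPstrict hMstrict FF
end
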